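/- arXiv:2007.15733 — 11 statements merged into one kernel-verified Lean document; each statement's English description precedes it below -/
import Mathlib

section
/- Let μ, α, β > 0 be real parameters with α > (3/2)β², and let f(x) = x(μ − αx) and g(x) = βx^{3/2} for x > 0, so that g'(x)g(x) = (3/2)β²x². Then for every h₀ > 0 there exist constants q ∈ (2, ∞), ϱ ∈ (1, ∞) and L₁ ∈ [0, ∞) such that for all x, y > 0 and all h ∈ (0, h₀]: 2(x − y)(f(x) − f(y)) + (q − 1)(g(x) − g(y))² + (ϱ/2)·h·((3/2)β²x² − (3/2)β²y²)² + h·((3/2)β²x² − (3/2)β²y²)(f(x) − f(y)) − h·(f(x) − f(y))² ≤ L₁ (x − y)². -/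
set_option maxHeartbeats 1000000


/-- Generalized monotonicity condition (θ = η = 1) for the Heston 3/2-volatility model
with drift f(x) = x(μ − αx) and diffusion g(x) = βx^{3/2}, g'g(x) = (3/2)β²x². -/
theorem stmt_0 (μ α β : ℝ) (hμ : 0 < μ) (hα : 0 < α) (hβ : 0 < β)
    (hαβ : α > (3/2) * β^2) :
    ∀ h₀ : ℝ, 0 < h₀ →
      ∃ q : ℝ, 2 < q ∧ ∃ ϱ : ℝ, 1 < ϱ ∧ ∃ L₁ : ℝ, 0 ≤ L₁ ∧
        ∀ x y h : ℝ, 0 < x → 0 < y → 0 < h → h ≤ h₀ →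
          2 * (x - y) * ((x * (μ - α * x)) - (y * (μ - α * y)))
            + (q - 1) * (β * x ^ (3/2 : ℝ) - β * y ^ (3/2 : ℝ))^2
            + (ϱ / 2) * h * ((3/2) * β^2 * x^2 - (3/2) * β^2 * y^2)^2
            + h * ((3/2) * β^2 * x^2 - (3/2) * β^2 * y^2)
                * ((x * (μ - α * x)) - (y * (μ - α * y)))
            - h * ((x * (μ - α * x)) - (y * (μ - α * y)))^2
          ≤ L₁ * (x - y)^2 := by
  intro h₀ hh₀
  have hβ2 : (0:ℝ) < β^2 := by positivity
  have hC : (0:ℝ) < α^2 + (3/2)*α*β^2 - (9/4)*β^4 := by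
    nlinarith [mul_pos (sub_pos.mpr hαβ) (by positivity : (0:ℝ) < α + (3/2)*β^2),
      mul_pos hα hβ2]
  have hM0 : (0:ℝ) ≤ ((3/2)*β^2*μ + 2*α*μ)^2 / (4*(α^2 + (3/2)*α*β^2 - (9/4)*β^4)) :=
    div_nonneg (sq_nonneg _) (by linarith)
  refine ⟨1 + 8*α/(9*β^2), ?_, 2, by norm_num,
    2*μ + h₀ * (((3/2)*β^2*μ + 2*α*μ)^2 / (4*(α^2 + (3/2)*α*β^2 - (9/4)*β^4))), ?_, ?_⟩
  · have h1 : 1 < 8*α/(9*β^2) := by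
      rw [lt_div_iff₀ (by positivity)]
      nlinarith
    linarith
  · nlinarith [mul_nonneg hh₀.le hM0]
  · intro x y h hx hy hh hhh₀
    have hrx : x ^ (3/2:ℝ) = x * Real.sqrt x := by
      rw [Real.sqrt_eq_rpow, show (3/2:ℝ) = 1 + 1/2 by norm_num, Real.rpow_add hx,
        Real.rpow_one]
    have hry : y ^ (3/2:ℝ) = y * Real.sqrt y := by
      rw [Real.sqrt_eq_rpow, show (3/2:ℝ) = 1 + 1/2 by norm_num, Real.rpow_add hy,
        Real.rpow_one]
    have key : (β * x ^ (3/2:ℝ) - β * y ^ (3/2:ℝ))^2 ≤ (9/4)*β^2*((x+y)*(x-y)^2) := by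
      rw [hrx, hry]
      set a := Real.sqrt x with hadef
      set c := Real.sqrt y with hcdef
      have ha0 : 0 ≤ a := Real.sqrt_nonneg x
      have hc0 : 0 ≤ c := Real.sqrt_nonneg y
      have ha2 : a^2 = x := Real.sq_sqrt hx.le
      have hc2 : c^2 = y := Real.sq_sqrt hy.le
      rw [← ha2, ← hc2]
      have hred : (a^2 + a*c + c^2)^2 ≤ (9/4)*(a^2+c^2)*(a+c)^2 := by
        nlinarith [mul_nonneg (mul_nonneg (mul_nonneg ha0 ha0) ha0) hc0,
          mul_nonneg (mul_nonneg (mul_nonneg ha0 hc0) hc0) hc0,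
          sq_nonneg (a*c), sq_nonneg a, sq_nonneg c]
      nlinarith [mul_le_mul_of_nonneg_left hred
        (by positivity : (0:ℝ) ≤ β^2*(a-c)^2)]
    -- bound for the (q-1) term
    have hq2 : (1 + 8*α/(9*β^2) - 1) * (β * x ^ (3/2:ℝ) - β * y ^ (3/2:ℝ))^2
        ≤ 2*α*((x+y)*(x-y)^2) := by
      have he : 8*α/(9*β^2) * ((9/4)*β^2*((x+y)*(x-y)^2)) = 2*α*((x+y)*(x-y)^2) := by
        field_simp
        ring
      calc (1 + 8*α/(9*β^2) - 1) * (β * x ^ (3/2:ℝ) - β * y ^ (3/2:ℝ))^2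
          = 8*α/(9*β^2) * (β * x ^ (3/2:ℝ) - β * y ^ (3/2:ℝ))^2 := by ring
        _ ≤ 8*α/(9*β^2) * ((9/4)*β^2*((x+y)*(x-y)^2)) :=
            mul_le_mul_of_nonneg_left key (by positivity)
        _ = 2*α*((x+y)*(x-y)^2) := he
    -- bound for the quadratic in s = x + y
    have hBle : (9/4)*β^4*(x+y)^2 + (3/2)*β^2*(x+y)*(μ - α*(x+y)) - (μ - α*(x+y))^2
        ≤ ((3/2)*β^2*μ + 2*α*μ)^2 / (4*(α^2 + (3/2)*α*β^2 - (9/4)*β^4)) := by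
      rw [le_div_iff₀ (by linarith)]
      nlinarith [sq_nonneg (2*(α^2 + (3/2)*α*β^2 - (9/4)*β^4)*(x+y)
        - ((3/2)*β^2*μ + 2*α*μ)), mul_pos hC (mul_pos hμ hμ)]
    have h1 : h * ((x-y)^2 * ((9/4)*β^4*(x+y)^2 + (3/2)*β^2*(x+y)*(μ - α*(x+y))
          - (μ - α*(x+y))^2))
        ≤ h * ((x-y)^2 * (((3/2)*β^2*μ + 2*α*μ)^2
          / (4*(α^2 + (3/2)*α*β^2 - (9/4)*β^4)))) :=
      mul_le_mul_of_nonneg_left (mul_le_mul_of_nonneg_left hBle (sq_nonneg _)) hh.le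
    have h2 : h * ((x-y)^2 * (((3/2)*β^2*μ + 2*α*μ)^2
          / (4*(α^2 + (3/2)*α*β^2 - (9/4)*β^4))))
        ≤ h₀ * ((x-y)^2 * (((3/2)*β^2*μ + 2*α*μ)^2
          / (4*(α^2 + (3/2)*α*β^2 - (9/4)*β^4)))) :=
      mul_le_mul_of_nonneg_right hhh₀ (mul_nonneg (sq_nonneg _) hM0)
    nlinarith [hq2, h1, h2]
end

section
/- Let μ, α, β > 0 and let q be a real number with 2 < q ≤ 1 + 8α/(9β²). Let f(x) = x(μ − αx) for x > 0. Then for all x, y > 0: 2(x − y)(f(x) − f(y)) + (q − 1)β²(x^{3/2} − y^{3/2})² ≤ 2μ (x − y)². -/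
lemma cube_sq_le (a b : ℝ) (ha : 0 ≤ a) (hb : 0 ≤ b) :
    (a^3 - b^3)^2 ≤ (9/4) * ((a^2 + b^2) * (a^2 - b^2)^2) := by
  have hid : (9/4) * ((a^2 + b^2) * (a^2 - b^2)^2) - (a^3 - b^3)^2
      = (a - b)^2 * ((5/4)*(a^4 + b^4) + (5/2)*(a^3*b + a*b^3) + (3/2)*a^2*b^2) := by
    ring
  have h1 : 0 ≤ a^3*b := mul_nonneg (pow_nonneg ha 3) hb
  have h2 : 0 ≤ a*b^3 := mul_nonneg ha (pow_nonneg hb 3)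
  have h3 : 0 ≤ a^2*b^2 := mul_nonneg (sq_nonneg a) (sq_nonneg b)
  have h4 : 0 ≤ (a - b)^2 * ((5/4)*(a^4 + b^4) + (5/2)*(a^3*b + a*b^3) + (3/2)*a^2*b^2) :=
    mul_nonneg (sq_nonneg _) (by nlinarith [sq_nonneg a, sq_nonneg b, pow_nonneg ha 4, pow_nonneg hb 4])
  linarith

lemma rpow_three_halves (x : ℝ) (hx : 0 ≤ x) : x ^ (3/2 : ℝ) = Real.sqrt x ^ 3 := by
  rw [show (3/2 : ℝ) = (1/2 : ℝ) * (3 : ℕ) by norm_num, Real.rpow_mul hx,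
    Real.rpow_natCast, ← Real.sqrt_eq_rpow]

/-- One-sided Lipschitz-plus-diffusion monotonicity estimate for the Heston
3/2-volatility model with drift f(x) = x(μ − αx) and diffusion g(x) = βx^{3/2}. -/
theorem stmt_3 (μ α β q : ℝ) (hμ : 0 < μ) (hα : 0 < α) (hβ : 0 < β)
    (hq2 : 2 < q) (hq : q ≤ 1 + 8 * α / (9 * β^2)) :
    ∀ x y : ℝ, 0 < x → 0 < y →
      2 * (x - y) * ((x * (μ - α * x)) - (y * (μ - α * y)))
        + (q - 1) * β^2 * (x ^ (3/2 : ℝ) - y ^ (3/2 : ℝ))^2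
      ≤ 2 * μ * (x - y)^2 := by
  intro x y hx hy
  have hb2 : (0:ℝ) < 9 * β^2 := by positivity
  have hc : (q - 1) * (9 * β^2) ≤ 8 * α := by
    have h1 : q - 1 ≤ 8 * α / (9 * β^2) := by linarith
    calc (q - 1) * (9 * β^2) ≤ (8 * α / (9 * β^2)) * (9 * β^2) :=
          mul_le_mul_of_nonneg_right h1 hb2.le
      _ = 8 * α := by field_simp
  set a := Real.sqrt x with hadef
  set b := Real.sqrt y with hbdef
  have ha : 0 ≤ a := Real.sqrt_nonneg x
  have hb : 0 ≤ b := Real.sqrt_nonneg y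
  have hxa : x = a^2 := (Real.sq_sqrt hx.le).symm
  have hyb : y = b^2 := (Real.sq_sqrt hy.le).symm
  rw [rpow_three_halves x hx.le, rpow_three_halves y hy.le, ← hadef, ← hbdef, hxa, hyb]
  have hkey := cube_sq_le a b ha hb
  have hqb : 0 ≤ (q - 1) * β^2 := mul_nonneg (by linarith) (sq_nonneg β)
  have ht : 0 ≤ (1/4) * ((a^2 + b^2) * (a^2 - b^2)^2) := by positivity
  have h1 : (q - 1) * β^2 * (a^3 - b^3)^2
      ≤ (q - 1) * β^2 * ((9/4) * ((a^2 + b^2) * (a^2 - b^2)^2)) :=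
    mul_le_mul_of_nonneg_left hkey hqb
  have h2 : (q - 1) * β^2 * ((9/4) * ((a^2 + b^2) * (a^2 - b^2)^2))
      = ((q - 1) * (9 * β^2)) * ((1/4) * ((a^2 + b^2) * (a^2 - b^2)^2)) := by ring
  have h3 : ((q - 1) * (9 * β^2)) * ((1/4) * ((a^2 + b^2) * (a^2 - b^2)^2))
      ≤ (8 * α) * ((1/4) * ((a^2 + b^2) * (a^2 - b^2)^2)) :=
    mul_le_mul_of_nonneg_right hc ht
  nlinarith [h1, h3, h2]
end

section
/- Let μ, α, β > 0 with α > (3/2)β², and let f(x) = x(μ − αx) for x > 0. Then there exist constants ϱ ∈ (1, ∞) and c̃ ∈ [0, ∞) such that for all x, y > 0: (9/8)ϱβ⁴(x² − y²)² + (3/2)β²(x² − y²)(f(x) − f(y)) − (f(x) − f(y))² ≤ c̃ (x − y)². -/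
/-- Bound on Ξ(x,y,h)/h in the monotonicity verification for the Heston
3/2-volatility model with drift f(x) = x(μ − αx). -/
theorem stmt_4 (μ α β : ℝ) (hμ : 0 < μ) (hα : 0 < α) (hβ : 0 < β)
    (hαβ : α > (3/2) * β^2) :
    ∃ ϱ : ℝ, 1 < ϱ ∧ ∃ c : ℝ, 0 ≤ c ∧
      ∀ x y : ℝ, 0 < x → 0 < y →
        (9/8) * ϱ * β^4 * (x^2 - y^2)^2
          + (3/2) * β^2 * (x^2 - y^2) * ((x * (μ - α * x)) - (y * (μ - α * y)))
          - ((x * (μ - α * x)) - (y * (μ - α * y)))^2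
        ≤ c * (x - y)^2 := by
  have hβ2 : 0 < β^2 := by positivity
  have hD : 0 < α^2 + (3/2)*β^2*α - (9/4)*β^4 := by nlinarith [mul_lt_mul_of_pos_left hαβ hβ2]
  refine ⟨2, by norm_num,
    ((3/2)*β^2*μ + 2*α*μ)^2 / (4*(α^2 + (3/2)*β^2*α - (9/4)*β^4)), by positivity, ?_⟩
  intro x y hx hy
  rw [show ((3/2)*β^2*μ + 2*α*μ)^2 / (4*(α^2 + (3/2)*β^2*α - (9/4)*β^4)) * (x-y)^2
      = ((3/2)*β^2*μ + 2*α*μ)^2 * (x-y)^2 / (4*(α^2 + (3/2)*β^2*α - (9/4)*β^4)) from by ring,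
    le_div_iff₀ (by linarith)]
  nlinarith [sq_nonneg ((2*(α^2 + (3/2)*β^2*α - (9/4)*β^4)*(x+y) - ((3/2)*β^2*μ + 2*α*μ))*(x-y)),
    mul_nonneg hD.le (sq_nonneg ((x-y)*μ))]
end

section
/- Let κ, ρ > 1 be real numbers with κ + 1 > 2ρ. Then for every c > 0 there exists a₀ ∈ [0, ∞) such that for all real x > y > 0: x^{2ρ−1} − y^{2ρ−1} ≤ c·(x^κ − y^κ) + a₀·(x − y). -/
/-!
Let `g t = c t^κ + a₀ t - t^(2ρ-1)`. Its derivative on `(0, ∞)` is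
`c κ t^(κ-1) + a₀ - (2ρ-1) t^(2ρ-2)`, which is nonnegative as soon as `a₀` bounds
`(2ρ-1) v^(2ρ-2) - c κ v^(κ-1)`; this supremum is finite because `κ - 1 > 2ρ - 2 ≥ 0`.
So `g` is monotone, and `g y ≤ g x` is the claim.
-/

open Set

lemma exists_mul_rpow_le_mul_rpow_add {p q A B : ℝ} (hp : 0 ≤ p) (hpq : p < q) (hA : 0 ≤ A)
    (hB : 0 < B) : ∃ a, 0 ≤ a ∧ ∀ v, 0 < v → A * v ^ p ≤ B * v ^ q + a := by
  -- Beyond `M`, `B v^q` alone dominates `A v^p`; below it, `A v^p ≤ A M^p`.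
  set M := (A / B) ^ (q - p)⁻¹
  have hM : 0 ≤ M := Real.rpow_nonneg (div_nonneg hA hB.le) _
  refine ⟨A * M ^ p, by positivity, fun v hv => ?_⟩
  rcases le_or_gt v M with hvM | hMv
  · have : v ^ p ≤ M ^ p := Real.rpow_le_rpow hv.le hvM hp
    nlinarith [Real.rpow_nonneg hv.le q]
  · have hAB : A / B ≤ v ^ (q - p) := by
      calc A / B = M ^ (q - p) := (Real.rpow_inv_rpow (div_nonneg hA hB.le) (by linarith)).symm
        _ ≤ v ^ (q - p) := Real.rpow_le_rpow hM hMv.le (by linarith)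
    have hsplit : v ^ q = v ^ (q - p) * v ^ p := by
      rw [← Real.rpow_add hv, sub_add_cancel]
    have : A * v ^ p ≤ B * v ^ q := by
      rw [hsplit, ← mul_assoc]
      exact mul_le_mul_of_nonneg_right ((div_le_iff₀' hB).mp hAB) (Real.rpow_nonneg hv.le p)
    nlinarith [Real.rpow_nonneg hM p]

lemma rpow_sub_rpow_le_of_forall_deriv_le {s κ c a x y : ℝ}
    (hderiv : ∀ v, 0 < v → s * v ^ (s - 1) ≤ c * κ * v ^ (κ - 1) + a) (hy : 0 < y) (hyx : y ≤ x) :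
    x ^ s - y ^ s ≤ c * (x ^ κ - y ^ κ) + a * (x - y) := by
  let g : ℝ → ℝ := fun t => c * t ^ κ + a * t - t ^ s
  have hg : ∀ t ∈ Ioi (0 : ℝ),
      HasDerivAt g (c * (κ * t ^ (κ - 1)) + a * 1 - s * t ^ (s - 1)) t := fun t ht =>
    (((Real.hasDerivAt_rpow_const (Or.inl ht.ne')).const_mul c).add
      ((hasDerivAt_id t).const_mul a)).sub (Real.hasDerivAt_rpow_const (Or.inl ht.ne'))
  have hmono : MonotoneOn g (Ioi 0) := by
    refine monotoneOn_of_hasDerivWithinAt_nonneg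
      (f' := fun t => c * (κ * t ^ (κ - 1)) + a * 1 - s * t ^ (s - 1)) (convex_Ioi 0)
      (fun t ht => (hg t ht).continuousAt.continuousWithinAt) ?_ ?_
    · rw [interior_Ioi]
      exact fun t ht => (hg t ht).hasDerivWithinAt
    · rw [interior_Ioi]
      intro t ht
      linarith [hderiv t ht]
  have := hmono hy (hy.trans_le hyx) hyx
  simp only [g] at this
  linarith

theorem stmt_7_general (κ ρ : ℝ) (hρ : 1 < ρ) (hreg : κ + 1 > 2 * ρ) :
    ∀ c : ℝ, 0 < c → ∃ a₀ : ℝ, 0 ≤ a₀ ∧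
      ∀ x y : ℝ, 0 < y → y < x →
        x ^ (2 * ρ - 1) - y ^ (2 * ρ - 1) ≤ c * (x ^ κ - y ^ κ) + a₀ * (x - y) := by
  intro c hc
  obtain ⟨a₀, ha₀, hbound⟩ := exists_mul_rpow_le_mul_rpow_add (p := 2 * ρ - 2) (q := κ - 1)
    (A := 2 * ρ - 1) (B := c * κ) (by linarith) (by linarith) (by linarith)
    (mul_pos hc (by linarith))
  refine ⟨a₀, ha₀, fun x y hy hyx => rpow_sub_rpow_le_of_forall_deriv_le (fun v hv => ?_) hy hyx.le⟩
  have hexp : 2 * ρ - 1 - 1 = 2 * ρ - 2 := by ring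
  rw [hexp]
  exact hbound v hv

/-- Key divided-difference estimate z_{2ρ−1} ≤ c z_κ + a₀ for the Ait-Sahalia model
in the standard regime κ + 1 > 2ρ. -/
theorem stmt_7 (κ ρ : ℝ) (hκ : 1 < κ) (hρ : 1 < ρ) (hreg : κ + 1 > 2 * ρ) :
    ∀ c : ℝ, 0 < c → ∃ a₀ : ℝ, 0 ≤ a₀ ∧
      ∀ x y : ℝ, 0 < y → y < x →
        x ^ (2 * ρ - 1) - y ^ (2 * ρ - 1) ≤ c * (x ^ κ - y ^ κ) + a₀ * (x - y) :=
  stmt_7_general κ ρ hρ hreg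
end

section
/- Let α₋₁, α₀, α₁, α₂, σ > 0 and κ, ρ > 1 with κ + 1 > 2ρ, and let f(x) = α₋₁x⁻¹ − α₀ + α₁x − α₂x^κ for x > 0. Then for every ϱ ∈ (1, ∞) there exists a constant C ∈ [0, ∞) such that for all x, y > 0: (ϱ/2)·ρ²σ⁴·(x^{2ρ−1} − y^{2ρ−1})² ≤ (f(x) − f(y))² + C (x − y)². -/
/-!
Put `a = 2ρ - 1`, so that `1 < a < κ`. Because `t ↦ t ^ a` grows more slowly than `t ↦ t ^ κ`,
for every `ε > 0` there is `M` with `x ^ a - y ^ a ≤ ε (x ^ κ - y ^ κ) + M (x - y)` whenever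
`0 < y ≤ x`. On the other hand, for `y ≤ x` the terms `α₋₁ x⁻¹` and `α₁ x` of the drift `f` give
`α₂ (x ^ κ - y ^ κ) ≤ α₁ (x - y) - (f x - f y)`. Squaring both estimates and choosing `ε` small
compared with `α₂` absorbs the Milstein term into `(f x - f y) ^ 2` up to a multiple of
`(x - y) ^ 2`.
-/

open Real Set

lemma exists_rpow_le_mul_rpow_add {p q c : ℝ} (hp : 0 ≤ p) (hpq : p < q) (hc : 0 < c) :
    ∃ M, ∀ t : ℝ, 0 < t → t ^ p ≤ c * t ^ q + M := by
  -- Beyond `T`, where `T ^ (p - q) = c`, the power `t ^ q` dominates; below `T`, `t ^ p ≤ T ^ p`.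
  set T := c ^ (p - q)⁻¹
  have hT : 0 < T := rpow_pos_of_pos hc _
  have hTc : T ^ (p - q) = c := rpow_inv_rpow hc.le (by linarith)
  refine ⟨T ^ p, fun t ht => ?_⟩
  rcases le_total t T with htT | hTt
  · have : t ^ p ≤ T ^ p := rpow_le_rpow ht.le htT hp
    have : 0 ≤ c * t ^ q := by positivity
    linarith
  · have hsmall : t ^ (p - q) ≤ c := hTc ▸ rpow_le_rpow_of_nonpos hT hTt (by linarith)
    have : t ^ p ≤ c * t ^ q := by
      calc t ^ p = t ^ (p - q) * t ^ q := by rw [← rpow_add ht]; ring_nf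
        _ ≤ c * t ^ q := by gcongr
    have : 0 ≤ T ^ p := by positivity
    linarith

lemma exists_rpow_sub_rpow_le {a κ ε : ℝ} (ha : 1 ≤ a) (haκ : a < κ) (hε : 0 < ε) :
    ∃ M, ∀ x y : ℝ, 0 < y → y ≤ x → x ^ a - y ^ a ≤ ε * (x ^ κ - y ^ κ) + M * (x - y) := by
  obtain ⟨M, hM⟩ := exists_rpow_le_mul_rpow_add (p := a - 1) (q := κ - 1) (c := ε * κ / a)
    (by linarith) (by linarith) (div_pos (mul_pos hε (by linarith)) (by linarith))
  set H : ℝ → ℝ := fun t => ε * t ^ κ + t * (a * M) - t ^ a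
  set H' : ℝ → ℝ := fun t => ε * (κ * t ^ (κ - 1)) + a * M - a * t ^ (a - 1)
  have hH : ∀ t ∈ Ioi (0 : ℝ), HasDerivAt H (H' t) t := fun t ht =>
    (((hasDerivAt_rpow_const (Or.inl ht.ne')).const_mul ε).add
      (hasDerivAt_mul_const (a * M))).sub (hasDerivAt_rpow_const (Or.inl ht.ne'))
  have hH' : ∀ t ∈ Ioi (0 : ℝ), 0 ≤ H' t := fun t ht => by
    have := mul_le_mul_of_nonneg_left (hM t ht) (by linarith : 0 ≤ a)
    field_simp at this
    simp only [H']
    linarith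
  have hmono : MonotoneOn H (Ioi 0) :=
    monotoneOn_of_hasDerivWithinAt_nonneg (convex_Ioi 0)
      (fun t ht => (hH t ht).continuousAt.continuousWithinAt)
      (by simpa only [interior_Ioi] using fun t ht => (hH t ht).hasDerivWithinAt)
      (by simpa only [interior_Ioi] using hH')
  refine ⟨a * M, fun x y hy hyx => ?_⟩
  have := hmono (mem_Ioi.2 hy) (mem_Ioi.2 (hy.trans_le hyx)) hyx
  simp only [H] at this
  linarith

lemma drift_sub_le {αm1 α₀ α₁ α₂ κ x y : ℝ} (hm1 : 0 ≤ αm1) (hy : 0 < y) (hyx : y ≤ x) :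
    (αm1 * x⁻¹ - α₀ + α₁ * x - α₂ * x ^ κ) - (αm1 * y⁻¹ - α₀ + α₁ * y - α₂ * y ^ κ)
      ≤ α₁ * (x - y) - α₂ * (x ^ κ - y ^ κ) := by
  have : αm1 * x⁻¹ ≤ αm1 * y⁻¹ := mul_le_mul_of_nonneg_left (inv_anti₀ hy hyx) hm1
  linarith

lemma mul_sq_le_sq_add_mul_sq {K ε M α₁ α₂ A u d F : ℝ} (hK : 0 ≤ K)
    (hε : 4 * K * ε ^ 2 = α₂ ^ 2) (hA₀ : 0 ≤ A) (hA : A ≤ ε * u + M * d) (hu : 0 ≤ α₂ * u)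
    (hF : α₂ * u ≤ α₁ * d - F) :
    K * A ^ 2 ≤ F ^ 2 + (α₁ ^ 2 + 2 * K * M ^ 2) * d ^ 2 := by
  have hA2 : A ^ 2 ≤ 2 * ε ^ 2 * u ^ 2 + 2 * M ^ 2 * d ^ 2 := by
    nlinarith [sq_nonneg (ε * u - M * d)]
  have hF2 : α₂ ^ 2 * u ^ 2 ≤ 2 * F ^ 2 + 2 * α₁ ^ 2 * d ^ 2 := by
    nlinarith [sq_nonneg (α₁ * d + F)]
  nlinarith [mul_le_mul_of_nonneg_left hA2 hK]

theorem stmt_8_general (αm1 α₀ α₁ α₂ σ κ ρ : ℝ)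
    (hm1 : 0 < αm1) (h₂ : 0 < α₂) (hσ : 0 < σ)
    (hρ : 1 < ρ) (hreg : κ + 1 > 2 * ρ) :
    ∀ ϱ : ℝ, 1 < ϱ → ∃ C : ℝ, 0 ≤ C ∧
      ∀ x y : ℝ, 0 < x → 0 < y →
        (ϱ / 2) * ρ^2 * σ^4 * (x ^ (2 * ρ - 1) - y ^ (2 * ρ - 1))^2
          ≤ ((αm1 * x⁻¹ - α₀ + α₁ * x - α₂ * x ^ κ)
              - (αm1 * y⁻¹ - α₀ + α₁ * y - α₂ * y ^ κ))^2
            + C * (x - y)^2 := by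
  intro ϱ hϱ
  set K := ϱ / 2 * ρ ^ 2 * σ ^ 4
  have hK : 0 < K := by have : 0 < ϱ := (by linarith); positivity
  set ε := α₂ / (2 * √K)
  have hε : 4 * K * ε ^ 2 = α₂ ^ 2 := by
    simp only [ε, div_pow, mul_pow, sq_sqrt hK.le]; field_simp; ring
  obtain ⟨M, hM⟩ := exists_rpow_sub_rpow_le (a := 2 * ρ - 1) (κ := κ) (ε := ε)
    (by linarith) (by linarith) (by positivity)
  refine ⟨α₁ ^ 2 + 2 * K * M ^ 2, by positivity, fun x y hx hy => ?_⟩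
  wlog hyx : y ≤ x generalizing x y
  · simpa only [sub_sq_comm] using this y x hy hx (le_of_not_ge hyx)
  have hu : 0 ≤ x ^ κ - y ^ κ := sub_nonneg.2 (rpow_le_rpow hy.le hyx (by linarith))
  exact mul_sq_le_sq_add_mul_sq hK.le hε
    (sub_nonneg.2 (rpow_le_rpow hy.le hyx (by linarith))) (hM x y hy hyx)
    (mul_nonneg h₂.le hu) (le_sub_comm.2 (drift_sub_le hm1.le hy hyx))

/-- Monotonicity condition component involving the Milstein term for the Ait-Sahalia
model in the standard regime κ + 1 > 2ρ, with drift
f(x) = α₋₁x⁻¹ − α₀ + α₁x − α₂x^κ. -/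
theorem stmt_8 (αm1 α₀ α₁ α₂ σ κ ρ : ℝ)
    (hm1 : 0 < αm1) (h₀ : 0 < α₀) (h₁ : 0 < α₁) (h₂ : 0 < α₂) (hσ : 0 < σ)
    (hκ : 1 < κ) (hρ : 1 < ρ) (hreg : κ + 1 > 2 * ρ) :
    ∀ ϱ : ℝ, 1 < ϱ → ∃ C : ℝ, 0 ≤ C ∧
      ∀ x y : ℝ, 0 < x → 0 < y →
        (ϱ / 2) * ρ^2 * σ^4 * (x ^ (2 * ρ - 1) - y ^ (2 * ρ - 1))^2
          ≤ ((αm1 * x⁻¹ - α₀ + α₁ * x - α₂ * x ^ κ)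
              - (αm1 * y⁻¹ - α₀ + α₁ * y - α₂ * y ^ κ))^2
            + C * (x - y)^2 :=
  stmt_8_general αm1 α₀ α₁ α₂ σ κ ρ hm1 h₂ hσ hρ hreg
end

section
/- Let α₋₁, α₀, α₁, α₂, σ > 0 and κ, ρ > 1 with κ + 1 > 2ρ, and let q > 2. Define f(x) = α₋₁x⁻¹ − α₀ + α₁x − α₂x^κ and g(x) = σx^ρ for x > 0. Then L := sup_{x > 0} ( −α₋₁x⁻² + α₁ − α₂κx^{κ−1} + ((q−1)/2)σ²ρ²x^{2ρ−2} ) is finite, and for all x, y > 0: (x − y)(f(x) − f(y)) + ((q−1)/2)(g(x) − g(y))² ≤ L (x − y)². -/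
/-!
Both estimates are elementary. For the bound on `L`: in the bracket the `x⁻²` term is
nonpositive and, since `κ - 1 > 2ρ - 2 ≥ 0`, the negative power `x ^ (κ - 1)` dominates the
positive power `x ^ (2ρ - 2)` for large `x`.

For the monotonicity estimate, write `d = (g x - g y) / (x - y)` and
`h = f + c (2 d g - d² id)`. Then `(x - y)(h x - h y)` is exactly the left-hand side, while
`h' = f' + c (g'² - (g' - d)²) ≤ f' + c g'² ≤ L`, so the mean value theorem bounds it by
`L (x - y)²`.
-/

open Set

lemma sub_mul_sub_le_of_hasDerivAt_le {D : Set ℝ} (hD : Convex ℝ D) {φ φ' : ℝ → ℝ} {C : ℝ}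
    (hφ : ∀ v ∈ D, HasDerivAt φ (φ' v) v) (hle : ∀ v ∈ D, φ' v ≤ C)
    {x y : ℝ} (hx : x ∈ D) (hy : y ∈ D) :
    (x - y) * (φ x - φ y) ≤ C * (x - y) ^ 2 := by
  have hanti : AntitoneOn (fun v => φ v - C * v) D := by
    refine antitoneOn_of_hasDerivWithinAt_nonpos (f' := fun v => φ' v - C) hD
      (fun v hv => ((hφ v hv).continuousAt.sub (continuousAt_const.mul continuousAt_id))
        |>.continuousWithinAt)
      (fun v hv => ?_) (fun v hv => sub_nonpos.2 (hle v (interior_subset hv)))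
    simpa using ((hφ v (interior_subset hv)).fun_sub ((hasDerivAt_id' v).const_mul C))
      |>.hasDerivWithinAt
  rcases le_total x y with hxy | hyx
  · nlinarith [hanti hx hy hxy]
  · nlinarith [hanti hy hx hyx]

theorem sub_mul_sub_add_mul_sq_le_of_hasDerivAt {D : Set ℝ} (hD : Convex ℝ D)
    {f f' g g' : ℝ → ℝ} {c L : ℝ} (hf : ∀ v ∈ D, HasDerivAt f (f' v) v)
    (hg : ∀ v ∈ D, HasDerivAt g (g' v) v) (hc : 0 ≤ c) (hL : ∀ v ∈ D, f' v + c * g' v ^ 2 ≤ L)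
    {x y : ℝ} (hx : x ∈ D) (hy : y ∈ D) :
    (x - y) * (f x - f y) + c * (g x - g y) ^ 2 ≤ L * (x - y) ^ 2 := by
  obtain ⟨d, hd⟩ : ∃ d, d * (x - y) = g x - g y := by
    rcases eq_or_ne x y with rfl | hxy
    · exact ⟨0, by simp⟩
    · exact ⟨_, div_mul_cancel₀ _ (sub_ne_zero.2 hxy)⟩
  have hh : ∀ v ∈ D, HasDerivAt (fun v => f v + c * (2 * d * g v - d ^ 2 * v))
      (f' v + c * (2 * d * g' v - d ^ 2)) v := fun v hv => by
    simpa using (hf v hv).fun_add ((((hg v hv).const_mul (2 * d)).fun_sub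
      ((hasDerivAt_id' v).const_mul (d ^ 2))).const_mul c)
  have hh_le : ∀ v ∈ D, f' v + c * (2 * d * g' v - d ^ 2) ≤ L := fun v hv => by
    nlinarith [hL v hv, mul_nonneg hc (sq_nonneg (g' v - d))]
  linear_combination sub_mul_sub_le_of_hasDerivAt_le hD hh hh_le hx hy
    + c * (d * (x - y) - (g x - g y)) * hd

lemma exists_mul_rpow_sub_mul_rpow_le (A : ℝ) {B p r : ℝ} (hB : 0 < B) (hp : 0 ≤ p)
    (hpr : p < r) : ∃ M, ∀ v : ℝ, 0 < v → A * v ^ p - B * v ^ r ≤ M := by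
  set e := p / (r - p)
  refine ⟨|A| * (|A| / B) ^ e, fun v hv => ?_⟩
  have hsplit : A * v ^ p - B * v ^ r = v ^ p * (A - B * v ^ (r - p)) := by
    rw [mul_sub, ← mul_assoc, mul_comm (v ^ p) B, mul_assoc, ← Real.rpow_add hv]
    ring_nf
  have hbound_nonneg : 0 ≤ |A| * (|A| / B) ^ e := by positivity
  rcases le_or_gt A (B * v ^ (r - p)) with hA | hA
  · rw [hsplit]
    nlinarith [Real.rpow_nonneg hv.le p]
  · have hvp : v ^ p = (v ^ (r - p)) ^ e := by
      rw [← Real.rpow_mul hv.le, mul_div_cancel₀ _ (sub_pos.2 hpr).ne']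
    have hlt : v ^ (r - p) ≤ |A| / B := by
      rw [le_div_iff₀ hB, mul_comm]; exact hA.le.trans (le_abs_self A)
    have hle : v ^ p ≤ (|A| / B) ^ e := by
      rw [hvp]; exact Real.rpow_le_rpow (by positivity) hlt (div_nonneg hp (sub_pos.2 hpr).le)
    calc A * v ^ p - B * v ^ r ≤ |A| * v ^ p := by
          nlinarith [Real.rpow_nonneg hv.le r, Real.rpow_nonneg hv.le p, le_abs_self A]
      _ ≤ |A| * (|A| / B) ^ e := mul_le_mul_of_nonneg_left hle (abs_nonneg A)

lemma hasDerivAt_inv_sub_add_mul_sub_rpow (a b c d κ : ℝ) {v : ℝ} (hv : v ≠ 0) :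
    HasDerivAt (fun x : ℝ => a * x⁻¹ - b + c * x - d * x ^ κ)
      (-a / v ^ 2 + c - d * κ * v ^ (κ - 1)) v := by
  refine (((((hasDerivAt_inv hv).const_mul a).sub_const b).fun_add
    ((hasDerivAt_id' v).const_mul c)).fun_sub
    ((Real.hasDerivAt_rpow_const (p := κ) (Or.inl hv)).const_mul d)).congr_deriv ?_
  ring

theorem stmt_9_general (αm1 α₀ α₁ α₂ σ κ ρ q : ℝ)
    (hm1 : 0 < αm1) (h₂ : 0 < α₂)
    (hρ : 1 < ρ) (hreg : κ + 1 > 2 * ρ) (hq : 2 < q) :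
    BddAbove ((fun x : ℝ => -αm1 / x^2 + α₁ - α₂ * κ * x ^ (κ - 1)
        + ((q - 1)/2) * σ^2 * ρ^2 * x ^ (2 * ρ - 2)) '' Set.Ioi 0) ∧
    ∀ x y : ℝ, 0 < x → 0 < y →
      (x - y) * ((αm1 * x⁻¹ - α₀ + α₁ * x - α₂ * x ^ κ)
          - (αm1 * y⁻¹ - α₀ + α₁ * y - α₂ * y ^ κ))
        + ((q - 1)/2) * (σ * x ^ ρ - σ * y ^ ρ)^2
      ≤ sSup ((fun x : ℝ => -αm1 / x^2 + α₁ - α₂ * κ * x ^ (κ - 1)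
          + ((q - 1)/2) * σ^2 * ρ^2 * x ^ (2 * ρ - 2)) '' Set.Ioi 0) * (x - y)^2 := by
  set F := fun x : ℝ => -αm1 / x^2 + α₁ - α₂ * κ * x ^ (κ - 1)
    + ((q - 1)/2) * σ^2 * ρ^2 * x ^ (2 * ρ - 2)
  have hF_bdd : BddAbove (F '' Ioi 0) := by
    obtain ⟨M, hM⟩ := exists_mul_rpow_sub_mul_rpow_le ((q - 1)/2 * σ^2 * ρ^2) (B := α₂ * κ)
      (p := 2 * ρ - 2) (r := κ - 1) (mul_pos h₂ (by linarith)) (by linarith) (by linarith)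
    refine ⟨α₁ + M, ?_⟩
    rintro _ ⟨v, hv, rfl⟩
    have hMv := hM v hv
    have hpole : -αm1 / v ^ 2 ≤ 0 := div_nonpos_of_nonpos_of_nonneg (by linarith) (by positivity)
    simp only [F]
    linarith
  refine ⟨hF_bdd, fun x y hx hy => ?_⟩
  refine sub_mul_sub_add_mul_sq_le_of_hasDerivAt (convex_Ioi 0)
    (fun v hv => hasDerivAt_inv_sub_add_mul_sub_rpow αm1 α₀ α₁ α₂ κ (ne_of_gt hv))
    (fun v hv => (Real.hasDerivAt_rpow_const (p := ρ) (Or.inl (ne_of_gt hv))).const_mul σ)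
    (by linarith) (fun v hv => ?_) hx hy
  have hsq : (σ * (ρ * v ^ (ρ - 1))) ^ 2 = σ ^ 2 * ρ ^ 2 * v ^ (2 * ρ - 2) := by
    rw [show 2 * ρ - 2 = (ρ - 1) * 2 by ring, Real.rpow_mul (le_of_lt hv)]
    norm_cast
    ring
  have hFv := le_csSup hF_bdd (mem_image_of_mem F hv)
  simp only [F] at hFv
  rw [hsq]
  linarith

/-- One-sided Lipschitz-plus-diffusion monotonicity estimate for the Ait-Sahalia model
in the standard regime κ + 1 > 2ρ, with L the (finite) supremum of
f'(x) + ((q−1)/2)|g'(x)|² over x > 0. -/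
theorem stmt_9 (αm1 α₀ α₁ α₂ σ κ ρ q : ℝ)
    (hm1 : 0 < αm1) (h₀ : 0 < α₀) (h₁ : 0 < α₁) (h₂ : 0 < α₂) (hσ : 0 < σ)
    (hκ : 1 < κ) (hρ : 1 < ρ) (hreg : κ + 1 > 2 * ρ) (hq : 2 < q) :
    BddAbove ((fun x : ℝ => -αm1 / x^2 + α₁ - α₂ * κ * x ^ (κ - 1)
        + ((q - 1)/2) * σ^2 * ρ^2 * x ^ (2 * ρ - 2)) '' Set.Ioi 0) ∧
    ∀ x y : ℝ, 0 < x → 0 < y →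
      (x - y) * ((αm1 * x⁻¹ - α₀ + α₁ * x - α₂ * x ^ κ)
          - (αm1 * y⁻¹ - α₀ + α₁ * y - α₂ * y ^ κ))
        + ((q - 1)/2) * (σ * x ^ ρ - σ * y ^ ρ)^2
      ≤ sSup ((fun x : ℝ => -αm1 / x^2 + α₁ - α₂ * κ * x ^ (κ - 1)
          + ((q - 1)/2) * σ^2 * ρ^2 * x ^ (2 * ρ - 2)) '' Set.Ioi 0) * (x - y)^2 :=
  stmt_9_general αm1 α₀ α₁ α₂ σ κ ρ q hm1 h₂ hρ hreg hq
end

section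
/- Let α₋₁, α₀, α₁, α₂, σ > 0 and κ > 1, and let h ∈ (0, 1/α₁]. Then for every real number b there exists a unique y > 0 such that y − h(α₋₁y⁻¹ − α₀ + α₁y − α₂y^κ) = b. -/
/-- Well-posedness and positivity of one step of the semi-implicit Milstein scheme
(θ = 1, η = 0) for the Ait-Sahalia model: the implicit equation has a unique
positive solution for every right-hand side b. -/
theorem stmt_10 (αm1 α₀ α₁ α₂ σ κ h : ℝ)
    (hm1 : 0 < αm1) (h₀ : 0 < α₀) (h₁ : 0 < α₁) (h₂ : 0 < α₂) (hσ : 0 < σ)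
    (hκ : 1 < κ) (hh : 0 < h) (hh1 : h ≤ 1 / α₁) :
    ∀ b : ℝ, ∃! y : ℝ, 0 < y ∧
      y - h * (αm1 * y⁻¹ - α₀ + α₁ * y - α₂ * y ^ κ) = b := by
  intro b
  set g : ℝ → ℝ := fun y => y - h * (αm1 * y⁻¹ - α₀ + α₁ * y - α₂ * y ^ κ) with hg
  have hhα₁ : h * α₁ ≤ 1 := by
    rw [le_div_iff₀ h₁] at hh1; linarith
  -- strict monotonicity on (0, ∞)
  have hmono : StrictMonoOn g (Set.Ioi 0) := by
    intro x hx y hy hxy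
    have hx0 : (0:ℝ) < x := hx
    have hy0 : (0:ℝ) < y := hy
    simp only [hg]
    have A : (1 - h * α₁) * x ≤ (1 - h * α₁) * y :=
      mul_le_mul_of_nonneg_left hxy.le (by linarith)
    have B : h * (αm1 * y⁻¹) < h * (αm1 * x⁻¹) := by
      apply mul_lt_mul_of_pos_left _ hh
      exact mul_lt_mul_of_pos_left (by exact inv_strictAnti₀ hx0 hxy) hm1
    have C : h * (α₂ * x ^ κ) ≤ h * (α₂ * y ^ κ) := by
      apply mul_le_mul_of_nonneg_left _ hh.le
      exact mul_le_mul_of_nonneg_left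
        (Real.rpow_le_rpow hx0.le hxy.le (by linarith)) h₂.le
    nlinarith [A, B, C]
  -- lower endpoint
  set Cb : ℝ := 1 + h * α₀ + h * α₂ - b with hCb
  set y₀ : ℝ := min 1 (h * αm1 / (1 + |Cb|)) with hy₀
  have habs : (0:ℝ) < 1 + |Cb| := by positivity
  have hy₀pos : 0 < y₀ := by
    apply lt_min one_pos
    positivity
  have hy₀le1 : y₀ ≤ 1 := min_le_left _ _
  have hy₀inv : (0:ℝ) < y₀⁻¹ := inv_pos.mpr hy₀pos
  have hfrac : y₀ * (1 + |Cb|) ≤ h * αm1 := by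
    have := min_le_right 1 (h * αm1 / (1 + |Cb|))
    calc y₀ * (1 + |Cb|) ≤ (h * αm1 / (1 + |Cb|)) * (1 + |Cb|) := by
          exact mul_le_mul_of_nonneg_right this habs.le
      _ = h * αm1 := by field_simp
  have key : 1 + |Cb| ≤ h * αm1 * y₀⁻¹ := by
    have h2 := mul_le_mul_of_nonneg_right hfrac hy₀inv.le
    calc 1 + |Cb| = y₀ * (1 + |Cb|) * y₀⁻¹ := by field_simp
      _ ≤ h * αm1 * y₀⁻¹ := h2
  have hκ1 : y₀ ^ κ ≤ 1 := Real.rpow_le_one hy₀pos.le hy₀le1 (by linarith)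
  have hgy₀ : g y₀ ≤ b := by
    simp only [hg]
    have b1 : h * α₂ * y₀ ^ κ ≤ h * α₂ * 1 :=
      mul_le_mul_of_nonneg_left hκ1 (by positivity)
    have b2 : 0 ≤ h * α₁ * y₀ := by positivity
    have b3 : Cb ≤ |Cb| := le_abs_self _
    rw [hCb] at b3
    nlinarith [key, b1, b2, b3, hy₀le1]
  -- upper endpoint
  set y₁ : ℝ := max 1 ((b + h * αm1) / (h * α₂)) with hy₁
  have hy₁ge1 : 1 ≤ y₁ := le_max_left _ _
  have hy₁pos : 0 < y₁ := lt_of_lt_of_le one_pos hy₁ge1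
  have hfrac1 : b + h * αm1 ≤ h * α₂ * y₁ := by
    have := le_max_right 1 ((b + h * αm1) / (h * α₂))
    rw [div_le_iff₀ (by positivity)] at this
    linarith [this]
  have hpow1 : y₁ ≤ y₁ ^ κ := by
    calc y₁ = y₁ ^ (1:ℝ) := (Real.rpow_one y₁).symm
      _ ≤ y₁ ^ κ := Real.rpow_le_rpow_of_exponent_le hy₁ge1 hκ.le
  have hinv1 : y₁⁻¹ ≤ 1 := by
    rw [inv_le_one_iff₀]; right; exact hy₁ge1
  have hgy₁ : b ≤ g y₁ := by
    simp only [hg]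
    have b1 : h * α₂ * y₁ ≤ h * α₂ * y₁ ^ κ :=
      mul_le_mul_of_nonneg_left hpow1 (by positivity)
    have b2 : h * αm1 * y₁⁻¹ ≤ h * αm1 * 1 :=
      mul_le_mul_of_nonneg_left hinv1 (by positivity)
    have b3 : (1 - h * α₁) * 1 ≤ (1 - h * α₁) * y₁ :=
      mul_le_mul_of_nonneg_left hy₁ge1 (by linarith)
    nlinarith [b1, b2, b3, hfrac1]
  -- continuity
  have hcont : ContinuousOn g (Set.Icc y₀ y₁) := by
    have hne : ∀ x ∈ Set.Icc y₀ y₁, x ≠ 0 := by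
      rintro x ⟨hx1, _⟩
      exact ne_of_gt (lt_of_lt_of_le hy₀pos hx1)
    apply ContinuousOn.sub continuousOn_id
    apply ContinuousOn.mul continuousOn_const
    apply ContinuousOn.sub
    · apply ContinuousOn.add
      · apply ContinuousOn.sub
        · exact ContinuousOn.mul continuousOn_const
            (ContinuousOn.inv₀ continuousOn_id hne)
        · exact continuousOn_const
      · exact ContinuousOn.mul continuousOn_const continuousOn_id
    · exact ContinuousOn.mul continuousOn_const
        (ContinuousOn.rpow_const continuousOn_id (fun x hx => Or.inl (hne x hx)))
  have hy₀y₁ : y₀ ≤ y₁ := le_trans hy₀le1 hy₁ge1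
  have hmem : b ∈ Set.Icc (g y₀) (g y₁) := ⟨hgy₀, hgy₁⟩
  obtain ⟨y, hyIcc, hgy⟩ := intermediate_value_Icc hy₀y₁ hcont hmem
  have hypos : 0 < y := lt_of_lt_of_le hy₀pos hyIcc.1
  refine ⟨y, ⟨hypos, hgy⟩, ?_⟩
  rintro z ⟨hzpos, hgz⟩
  exact hmono.injOn (Set.mem_Ioi.mpr hzpos) (Set.mem_Ioi.mpr hypos)
    (by rw [show g z = z - h * (αm1 * z⁻¹ - α₀ + α₁ * z - α₂ * z ^ κ) from rfl, hgz,
        ← hgy])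
end

section
/- Let α₋₁, α₀, α₁, α₂, σ > 0 and κ, ρ > 1 with κ + 1 = 2ρ and α₂/σ² > (κ + 1)/(2√2), and let f(x) = α₋₁x⁻¹ − α₀ + α₁x − α₂x^κ for x > 0. Then there exist constants ϱ ∈ (1, ∞) with α₂² > (ϱ/2)ρ²σ⁴ and C ∈ [0, ∞) such that for all x, y > 0: (ϱ/2)·ρ²σ⁴·(x^κ − y^κ)² ≤ (f(x) − f(y))² + C (x − y)². -/
/-!
Write `f x - f y = p + α₁ (x - y) - α₂ d` with `p = α₋₁ (x⁻¹ - y⁻¹)`, `d = x^κ - y^κ`.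
Expanding the square, the cross term `-2 α₂ p d` is nonnegative because `x⁻¹` decreases
while `x^κ` increases, and the cross term `-2 α₂ α₁ (x - y) d` is absorbed by Young's
inequality into `(α₂² - c) d² + C (x - y)²` for any `c < α₂²`. The hypothesis on `α₂ / σ²`
says exactly that `c = ρ²σ⁴/2` is below `α₂²`, which leaves room for some `ϱ > 1`.
-/

open Filter Set Topology

lemma exists_one_lt_mul_lt {M a : ℝ} (h : M < a) : ∃ ϱ, 1 < ϱ ∧ ϱ * M < a := by
  have hlim : ∀ᶠ ϱ in 𝓝 (1 : ℝ), ϱ * M < a :=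
    (continuous_id.mul continuous_const).continuousAt.eventually_lt continuousAt_const
      (by simpa using h)
  exact hlim.exists_gt

lemma inv_sub_inv_mul_rpow_sub_rpow_nonpos {x y κ : ℝ} (hx : 0 < x) (hy : 0 < y)
    (hκ : 0 ≤ κ) : (x⁻¹ - y⁻¹) * (x ^ κ - y ^ κ) ≤ 0 :=
  (inv_antitoneOn_Ioi.antivaryOn
    ((Real.monotoneOn_rpow_Ici_of_exponent_nonneg hκ).mono Ioi_subset_Ici_self)).sub_mul_sub_nonpos
    hy hx

lemma mul_sq_le_sq_add_div_mul_sq {a b c p d t : ℝ} (ha : 0 ≤ a) (hc : c < a ^ 2)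
    (hpd : p * d ≤ 0) :
    c * d ^ 2 ≤ (p + b * t - a * d) ^ 2 + (a * b) ^ 2 / (a ^ 2 - c) * t ^ 2 := by
  have hε : 0 < a ^ 2 - c := sub_pos.mpr hc
  have young : 2 * (a * b * t) * d ≤ (a ^ 2 - c) * d ^ 2 + (a * b) ^ 2 / (a ^ 2 - c) * t ^ 2 := by
    have hsq : ((a ^ 2 - c) * d - a * b * t) ^ 2 / (a ^ 2 - c)
        = (a ^ 2 - c) * d ^ 2 + (a * b) ^ 2 / (a ^ 2 - c) * t ^ 2 - 2 * (a * b * t) * d := by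
      field_simp
      ring
    have : 0 ≤ ((a ^ 2 - c) * d - a * b * t) ^ 2 / (a ^ 2 - c) := by positivity
    linarith
  nlinarith [sq_nonneg (p + b * t), mul_nonneg ha (neg_nonneg.mpr hpd)]

lemma half_sq_mul_pow_four_lt_sq {α σ κ ρ : ℝ} (hσ : 0 < σ) (hκ : -1 < κ)
    (hcrit : κ + 1 = 2 * ρ) (hpar : α / σ ^ 2 > (κ + 1) / (2 * Real.sqrt 2)) :
    ρ ^ 2 * σ ^ 4 / 2 < α ^ 2 := by
  have hlt : (κ + 1) / (2 * Real.sqrt 2) * σ ^ 2 < α := (lt_div_iff₀ (by positivity)).mp hpar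
  have hκ1 : 0 < κ + 1 := by linarith
  have hsq := pow_lt_pow_left₀ hlt (by positivity) two_ne_zero
  have h8 : (2 * Real.sqrt 2) ^ 2 = 8 := by
    rw [mul_pow, Real.sq_sqrt zero_le_two]; norm_num
  calc ρ ^ 2 * σ ^ 4 / 2 = ((κ + 1) / (2 * Real.sqrt 2) * σ ^ 2) ^ 2 := by
        rw [mul_pow, div_pow, h8, hcrit]; ring
    _ < α ^ 2 := hsq

theorem stmt_11_general (αm1 α₀ α₁ α₂ σ κ ρ : ℝ)
    (hm1 : 0 < αm1) (h₂ : 0 < α₂) (hσ : 0 < σ)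
    (hκ : 1 < κ) (hcrit : κ + 1 = 2 * ρ)
    (hpar : α₂ / σ^2 > (κ + 1) / (2 * Real.sqrt 2)) :
    ∃ ϱ : ℝ, 1 < ϱ ∧ α₂^2 > (ϱ / 2) * ρ^2 * σ^4 ∧ ∃ C : ℝ, 0 ≤ C ∧
      ∀ x y : ℝ, 0 < x → 0 < y →
        (ϱ / 2) * ρ^2 * σ^4 * (x ^ κ - y ^ κ)^2
          ≤ ((αm1 * x⁻¹ - α₀ + α₁ * x - α₂ * x ^ κ)
              - (αm1 * y⁻¹ - α₀ + α₁ * y - α₂ * y ^ κ))^2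
            + C * (x - y)^2 := by
  obtain ⟨ϱ, hϱ, hϱα⟩ :=
    exists_one_lt_mul_lt (half_sq_mul_pow_four_lt_sq hσ (by linarith) hcrit hpar)
  have hc : ϱ / 2 * ρ ^ 2 * σ ^ 4 < α₂ ^ 2 := by linarith
  refine ⟨ϱ, hϱ, hc, (α₂ * α₁) ^ 2 / (α₂ ^ 2 - ϱ / 2 * ρ ^ 2 * σ ^ 4),
    div_nonneg (sq_nonneg _) (sub_pos.mpr hc).le, fun x y hx hy => ?_⟩
  have hpd : αm1 * (x⁻¹ - y⁻¹) * (x ^ κ - y ^ κ) ≤ 0 := by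
    rw [mul_assoc]
    exact mul_nonpos_of_nonneg_of_nonpos hm1.le
      (inv_sub_inv_mul_rpow_sub_rpow_nonpos hx hy (by linarith))
  convert mul_sq_le_sq_add_div_mul_sq (b := α₁) (t := x - y) h₂.le hc hpd using 2
  ring

/-- Monotonicity condition component involving the Milstein term for the Ait-Sahalia
model in the critical regime κ + 1 = 2ρ, under α₂/σ² > (κ+1)/(2√2). -/
theorem stmt_11 (αm1 α₀ α₁ α₂ σ κ ρ : ℝ)
    (hm1 : 0 < αm1) (h₀ : 0 < α₀) (h₁ : 0 < α₁) (h₂ : 0 < α₂) (hσ : 0 < σ)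
    (hκ : 1 < κ) (hρ : 1 < ρ) (hcrit : κ + 1 = 2 * ρ)
    (hpar : α₂ / σ^2 > (κ + 1) / (2 * Real.sqrt 2)) :
    ∃ ϱ : ℝ, 1 < ϱ ∧ α₂^2 > (ϱ / 2) * ρ^2 * σ^4 ∧ ∃ C : ℝ, 0 ≤ C ∧
      ∀ x y : ℝ, 0 < x → 0 < y →
        (ϱ / 2) * ρ^2 * σ^4 * (x ^ κ - y ^ κ)^2
          ≤ ((αm1 * x⁻¹ - α₀ + α₁ * x - α₂ * x ^ κ)
              - (αm1 * y⁻¹ - α₀ + α₁ * y - α₂ * y ^ κ))^2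
            + C * (x - y)^2 :=
  stmt_11_general αm1 α₀ α₁ α₂ σ κ ρ hm1 h₂ hσ hκ hcrit hpar
end

section
/- Let α₋₁, α₀, α₁, α₂, σ > 0 and κ, ρ > 1 with κ + 1 = 2ρ, and let q > 2 satisfy α₂κ ≥ ((q−1)/8)σ²(κ+1)². Define f(x) = α₋₁x⁻¹ − α₀ + α₁x − α₂x^κ and g(x) = σx^ρ for x > 0. Then for all x, y > 0: (x − y)(f(x) − f(y)) + ((q−1)/2)(g(x) − g(y))² ≤ α₁ (x − y)². -/
/-- Tangent-line (convexity) bound for rpow. -/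
private lemma aux_tangent {ρ x y : ℝ} (hρ : 1 ≤ ρ) (hy : 0 < y) (hxy : y ≤ x) :
    x ^ ρ - y ^ ρ ≤ ρ * x ^ (ρ - 1) * (x - y) := by
  have hx : 0 < x := hy.trans_le hxy
  have hs : (-1 : ℝ) ≤ y / x - 1 := by
    have : 0 < y / x := div_pos hy hx
    linarith
  have hb := one_add_mul_self_le_rpow_one_add hs hρ
  rw [show 1 + (y / x - 1) = y / x from by ring] at hb
  rw [Real.div_rpow hy.le hx.le] at hb
  have hxp : 0 < x ^ ρ := Real.rpow_pos_of_pos hx ρ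
  rw [le_div_iff₀ hxp] at hb
  have hxρ : x ^ ρ = x ^ (ρ - 1) * x := by
    rw [← Real.rpow_add_one hx.ne' (ρ - 1)]
    norm_num
  have h2 : y / x * x ^ ρ = y * x ^ (ρ - 1) := by
    rw [hxρ, mul_comm (x ^ (ρ - 1)) x, ← mul_assoc, div_mul_cancel₀ y hx.ne']
  have h3 : ρ * (y / x * x ^ ρ) = ρ * (y * x ^ (ρ - 1)) := by rw [h2]
  have h4 : ρ * x ^ ρ = ρ * (x ^ (ρ - 1) * x) := by rw [hxρ]
  nlinarith [hb, h3, h4, hxρ]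

private noncomputable def Gfun (ρ y : ℝ) : ℝ → ℝ := fun t =>
  ρ ^ 2 * ((t - y) * (t ^ (2 * ρ - 1) - y ^ (2 * ρ - 1))) - (2 * ρ - 1) * (t ^ ρ - y ^ ρ) ^ 2

private noncomputable def Dfun (ρ y : ℝ) : ℝ → ℝ := fun t =>
  ρ ^ 2 * ((t ^ (2 * ρ - 1) - y ^ (2 * ρ - 1)) + (t - y) * ((2 * ρ - 1) * t ^ (2 * ρ - 1 - 1)))
    - (2 * (2 * ρ - 1) * ρ) * ((t ^ ρ - y ^ ρ) * t ^ (ρ - 1))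

/-- Key Cauchy–Schwarz-type inequality. -/
private lemma aux_key {ρ y x : ℝ} (hρ : 1 < ρ) (hy : 0 < y) (hxy : y ≤ x) :
    (2 * ρ - 1) * (x ^ ρ - y ^ ρ) ^ 2
      ≤ ρ ^ 2 * ((x - y) * (x ^ (2 * ρ - 1) - y ^ (2 * ρ - 1))) := by
  -- derivative facts
  have hGderiv : ∀ z : ℝ, y ≤ z → HasDerivAt (Gfun ρ y) (Dfun ρ y z) z := by
    intro z hz
    have hz0 : (0 : ℝ) < z := hy.trans_le hz
    have h1 : HasDerivAt (fun t : ℝ => t ^ (2 * ρ - 1) - y ^ (2 * ρ - 1))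
        ((2 * ρ - 1) * z ^ (2 * ρ - 1 - 1)) z :=
      (Real.hasDerivAt_rpow_const (Or.inl hz0.ne')).sub_const _
    have h2 : HasDerivAt (fun t : ℝ => t ^ ρ - y ^ ρ) (ρ * z ^ (ρ - 1)) z :=
      (Real.hasDerivAt_rpow_const (Or.inl hz0.ne')).sub_const _
    have h3 : HasDerivAt (fun t : ℝ => t - y) 1 z := (hasDerivAt_id z).sub_const y
    have hraw := ((h3.mul h1).const_mul (ρ ^ 2)).sub ((h2.pow 2).const_mul (2 * ρ - 1))
    have : HasDerivAt (Gfun ρ y)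
        (ρ ^ 2 * (1 * (z ^ (2 * ρ - 1) - y ^ (2 * ρ - 1))
            + (z - y) * ((2 * ρ - 1) * z ^ (2 * ρ - 1 - 1)))
          - (2 * ρ - 1) * ((2 : ℕ) * (z ^ ρ - y ^ ρ) ^ (2 - 1) * (ρ * z ^ (ρ - 1)))) z := hraw
    convert this using 1
    unfold Dfun
    push_cast
    ring
  have hDderiv : ∀ z : ℝ, y ≤ z → HasDerivAt (Dfun ρ y)
      (2 * (2 * ρ - 1) * ρ ^ 2 * (ρ - 1) * ((z - y) * (z ^ (ρ - 1) * z ^ (ρ - 1 - 1)))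
        - 2 * (2 * ρ - 1) * ρ * (ρ - 1) * ((z ^ ρ - y ^ ρ) * z ^ (ρ - 1 - 1))
        + (2 * (2 * ρ - 1) * ρ ^ 2 * (z ^ (2 * ρ - 1 - 1) - z ^ (ρ - 1) * z ^ (ρ - 1)))) z := by
    intro z hz
    have hz0 : (0 : ℝ) < z := hy.trans_le hz
    have hid1 : z ^ (ρ - 1) * z ^ (ρ - 1) = z ^ (2 * ρ - 1 - 1) := by
      rw [show (2 * ρ - 1 - 1 : ℝ) = (ρ - 1) + (ρ - 1) from by ring, Real.rpow_add hz0]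
    have hid2 : z ^ (ρ - 1) * z ^ (ρ - 1 - 1) = z ^ (2 * ρ - 1 - 1 - 1) := by
      rw [show (2 * ρ - 1 - 1 - 1 : ℝ) = (ρ - 1) + (ρ - 1 - 1) from by ring, Real.rpow_add hz0]
    have h1 : HasDerivAt (fun t : ℝ => t ^ (2 * ρ - 1) - y ^ (2 * ρ - 1))
        ((2 * ρ - 1) * z ^ (2 * ρ - 1 - 1)) z :=
      (Real.hasDerivAt_rpow_const (Or.inl hz0.ne')).sub_const _
    have h2 : HasDerivAt (fun t : ℝ => t ^ ρ - y ^ ρ) (ρ * z ^ (ρ - 1)) z :=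
      (Real.hasDerivAt_rpow_const (Or.inl hz0.ne')).sub_const _
    have h3 : HasDerivAt (fun t : ℝ => t - y) 1 z := (hasDerivAt_id z).sub_const y
    have hκd : HasDerivAt (fun t : ℝ => (2 * ρ - 1) * t ^ (2 * ρ - 1 - 1))
        ((2 * ρ - 1) * ((2 * ρ - 1 - 1) * z ^ (2 * ρ - 1 - 1 - 1))) z :=
      (Real.hasDerivAt_rpow_const (Or.inl hz0.ne')).const_mul (2 * ρ - 1)
    have hρd : HasDerivAt (fun t : ℝ => t ^ (ρ - 1)) ((ρ - 1) * z ^ (ρ - 1 - 1)) z :=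
      Real.hasDerivAt_rpow_const (Or.inl hz0.ne')
    have hraw := ((h1.add (h3.mul hκd)).const_mul (ρ ^ 2)).sub
      ((h2.mul hρd).const_mul (2 * (2 * ρ - 1) * ρ))
    have : HasDerivAt (Dfun ρ y)
        (ρ ^ 2 * ((2 * ρ - 1) * z ^ (2 * ρ - 1 - 1)
            + (1 * ((2 * ρ - 1) * z ^ (2 * ρ - 1 - 1))
              + (z - y) * ((2 * ρ - 1) * ((2 * ρ - 1 - 1) * z ^ (2 * ρ - 1 - 1 - 1)))))
          - 2 * (2 * ρ - 1) * ρ * ((ρ * z ^ (ρ - 1)) * z ^ (ρ - 1)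
            + (z ^ ρ - y ^ ρ) * ((ρ - 1) * z ^ (ρ - 1 - 1)))) z := hraw
    convert this using 1
    rw [← hid1, ← hid2]
    ring
  have hκpos : (0 : ℝ) < 2 * ρ - 1 := by linarith
  -- D is monotone on Ici y, D y = 0, hence D ≥ 0 there
  have hDmono : MonotoneOn (Dfun ρ y) (Set.Ici y) := by
    apply monotoneOn_of_hasDerivWithinAt_nonneg (convex_Ici y)
      (fun z hz => ((hDderiv z hz).continuousAt).continuousWithinAt)
      (fun z hz => by
        rw [interior_Ici] at hz
        exact (hDderiv z hz.le).hasDerivWithinAt)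
    intro z hz
    rw [interior_Ici] at hz
    have hzy : y ≤ z := hz.le
    have hz0 : (0 : ℝ) < z := hy.trans_le hzy
    have hid1 : z ^ (ρ - 1) * z ^ (ρ - 1) = z ^ (2 * ρ - 1 - 1) := by
      rw [show (2 * ρ - 1 - 1 : ℝ) = (ρ - 1) + (ρ - 1) from by ring, Real.rpow_add hz0]
    have hbpos : (0 : ℝ) < z ^ (ρ - 1 - 1) := Real.rpow_pos_of_pos hz0 _
    have htan := aux_tangent hρ.le hy hzy
    have hmul := mul_le_mul_of_nonneg_right htan hbpos.le
    have hcpos : (0 : ℝ) ≤ 2 * (2 * ρ - 1) * ρ * (ρ - 1) :=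
      mul_nonneg (mul_nonneg (mul_nonneg (by norm_num) hκpos.le) (by linarith)) (by linarith)
    have hfin := mul_le_mul_of_nonneg_left hmul hcpos
    rw [hid1]
    ring_nf
    ring_nf at hfin
    linarith [hfin]
  have hDy : Dfun ρ y y = 0 := by unfold Dfun; ring
  have hDnonneg : ∀ z : ℝ, y ≤ z → 0 ≤ Dfun ρ y z := by
    intro z hz
    have := hDmono (Set.self_mem_Ici) (Set.mem_Ici.mpr hz) hz
    rw [hDy] at this
    exact this
  -- G is monotone on Ici y
  have hGmono : MonotoneOn (Gfun ρ y) (Set.Ici y) := by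
    apply monotoneOn_of_hasDerivWithinAt_nonneg (convex_Ici y)
      (fun z hz => ((hGderiv z hz).continuousAt).continuousWithinAt)
      (fun z hz => by
        rw [interior_Ici] at hz
        exact (hGderiv z hz.le).hasDerivWithinAt)
    intro z hz
    rw [interior_Ici] at hz
    exact hDnonneg z hz.le
  have hGy : Gfun ρ y y = 0 := by unfold Gfun; ring
  have := hGmono (Set.self_mem_Ici) (Set.mem_Ici.mpr hxy) hxy
  rw [hGy] at this
  unfold Gfun at this
  linarith

set_option maxHeartbeats 1000000 in
private lemma main_half (αm1 α₀ α₁ α₂ σ ρ q : ℝ)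
    (hm1 : 0 < αm1) (h₂ : 0 < α₂) (hσ : 0 < σ) (hρ : 1 < ρ)
    (hq : 2 < q) (hpar : ((q - 1)/8) * σ^2 * ((2 * ρ - 1) + 1)^2 ≤ α₂ * (2 * ρ - 1))
    (x y : ℝ) (hx : 0 < x) (hy : 0 < y) (hxy : y ≤ x) :
    (x - y) * ((αm1 * x⁻¹ - α₀ + α₁ * x - α₂ * x ^ (2 * ρ - 1))
        - (αm1 * y⁻¹ - α₀ + α₁ * y - α₂ * y ^ (2 * ρ - 1)))
      + ((q - 1)/2) * (σ * x ^ ρ - σ * y ^ ρ)^2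
    ≤ α₁ * (x - y)^2 := by
  have hκpos : (0 : ℝ) < 2 * ρ - 1 := by linarith
  have key := aux_key hρ hy hxy
  have hB : 0 ≤ (x - y) * (x ^ (2 * ρ - 1) - y ^ (2 * ρ - 1)) := by
    have h := Real.rpow_le_rpow hy.le hxy hκpos.le
    exact mul_nonneg (by linarith) (by linarith)
  have hc : ((q - 1)/2) * σ^2 * ρ^2 ≤ α₂ * (2 * ρ - 1) := by
    have : ((q - 1)/8) * σ^2 * ((2 * ρ - 1) + 1)^2 = ((q - 1)/2) * σ^2 * ρ^2 := by ring
    linarith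
  have hcnn : (0 : ℝ) ≤ ((q - 1)/2) * σ^2 :=
    mul_nonneg (by linarith) (sq_nonneg σ)
  have h5 := mul_le_mul_of_nonneg_left key hcnn
  have h6 := mul_le_mul_of_nonneg_right hc hB
  have h7 : (2 * ρ - 1) * (((q - 1)/2) * σ^2 * (x ^ ρ - y ^ ρ)^2)
      ≤ (2 * ρ - 1) * (α₂ * ((x - y) * (x ^ (2 * ρ - 1) - y ^ (2 * ρ - 1)))) := by
    linarith [h5, h6]
  have hkey2 : ((q - 1)/2) * σ^2 * (x ^ ρ - y ^ ρ)^2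
      ≤ α₂ * ((x - y) * (x ^ (2 * ρ - 1) - y ^ (2 * ρ - 1))) :=
    le_of_mul_le_mul_left h7 hκpos
  have hinv : x⁻¹ ≤ y⁻¹ := inv_anti₀ hy hxy
  have hA : (x - y) * (αm1 * x⁻¹ - αm1 * y⁻¹) ≤ 0 := by
    apply mul_nonpos_of_nonneg_of_nonpos (by linarith)
    have := mul_le_mul_of_nonneg_left hinv hm1.le
    linarith
  nlinarith [hA, hkey2]

/-- One-sided Lipschitz-plus-diffusion monotonicity estimate for the Ait-Sahalia model
in the critical regime κ + 1 = 2ρ under α₂κ ≥ ((q−1)/8)σ²(κ+1)². -/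
theorem stmt_12 (αm1 α₀ α₁ α₂ σ κ ρ q : ℝ)
    (hm1 : 0 < αm1) (h₀ : 0 < α₀) (h₁ : 0 < α₁) (h₂ : 0 < α₂) (hσ : 0 < σ)
    (hκ : 1 < κ) (hρ : 1 < ρ) (hcrit : κ + 1 = 2 * ρ)
    (hq : 2 < q) (hpar : ((q - 1)/8) * σ^2 * (κ + 1)^2 ≤ α₂ * κ) :
    ∀ x y : ℝ, 0 < x → 0 < y →
      (x - y) * ((αm1 * x⁻¹ - α₀ + α₁ * x - α₂ * x ^ κ)
          - (αm1 * y⁻¹ - α₀ + α₁ * y - α₂ * y ^ κ))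
        + ((q - 1)/2) * (σ * x ^ ρ - σ * y ^ ρ)^2
      ≤ α₁ * (x - y)^2 := by
  have hκρ : κ = 2 * ρ - 1 := by linarith
  subst hκρ
  intro x y hx hy
  rcases le_total y x with h | h
  · exact main_half αm1 α₀ α₁ α₂ σ ρ q hm1 h₂ hσ hρ hq hpar x y hx hy h
  · have hmain := main_half αm1 α₀ α₁ α₂ σ ρ q hm1 h₂ hσ hρ hq hpar y x hy hx h
    calc (x - y) * ((αm1 * x⁻¹ - α₀ + α₁ * x - α₂ * x ^ (2 * ρ - 1))
          - (αm1 * y⁻¹ - α₀ + α₁ * y - α₂ * y ^ (2 * ρ - 1)))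
        + ((q - 1)/2) * (σ * x ^ ρ - σ * y ^ ρ)^2
        = (y - x) * ((αm1 * y⁻¹ - α₀ + α₁ * y - α₂ * y ^ (2 * ρ - 1))
          - (αm1 * x⁻¹ - α₀ + α₁ * x - α₂ * x ^ (2 * ρ - 1)))
        + ((q - 1)/2) * (σ * y ^ ρ - σ * x ^ ρ)^2 := by ring
      _ ≤ α₁ * (y - x)^2 := hmain
      _ = α₁ * (x - y)^2 := by ring
end

section
/- Let α₋₁, α₀, α₁, α₂, σ > 0 and κ, ρ > 1 with κ + 1 = 2ρ, α₂/σ² ≥ 2κ − 3/2 and α₂/σ² > (κ + 1)/(2√2). Define f(x) = α₋₁x⁻¹ − α₀ + α₁x − α₂x^κ and g(x) = σx^ρ for x > 0, so that g'(x)g(x) = ρσ²x^{2ρ−1}. Then for every h₀ > 0 there exist constants q ∈ (2, ∞), ϱ ∈ (1, ∞) and L₁ ∈ [0, ∞) such that for all x, y > 0 and all h ∈ (0, h₀]: 2(x − y)(f(x) − f(y)) + (q − 1)(g(x) − g(y))² + (ϱ/2)·h·(ρσ²x^{2ρ−1} − ρσ²y^{2ρ−1})² − h·(f(x) − f(y))²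 ≤ L₁ (x − y)². -/
/-!
With `Δ` denoting the difference between the values at `x` and `y`, the drift difference is
`α₁ Δx + α₋₁ Δ(x⁻¹) - α₂ Δ(x^κ)`, and the cross products `Δx Δ(x⁻¹)` and `Δ(x^κ) Δ(x⁻¹)` are
nonpositive by monotonicity. In the critical regime `κ = 2ρ - 1` a Cauchy–Schwarz type bound
`κ (Δ x^ρ)² ≤ ρ² Δx Δ(x^κ)` lets the good term `-2 α₂ Δx Δ(x^κ)` absorb the diffusion term once
`σ²ρ² < 2 α₂ κ`, and `-h (Δf)² ≤ -h α₂² (Δ x^κ)² + 2 h α₁ α₂ Δx Δ(x^κ)` absorbs the `g'g` term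
once `ρ²σ⁴ < 2 α₂²`, up to `O(h (Δx)²)`. Both parameter conditions follow from
`α₂/σ² > (κ+1)/(2√2)`.
-/

open Set

theorem mul_sq_rpow_sub_rpow_le_of_le {p x y : ℝ} (hp : 1 < 2 * p) (hy : 0 < y) (hyx : y ≤ x) :
    (2 * p - 1) * (x ^ p - y ^ p) ^ 2
      ≤ p ^ 2 * ((x - y) * (x ^ (2 * p - 1) - y ^ (2 * p - 1))) := by
  have hψ (c : ℝ) : MonotoneOn
      (fun t : ℝ => c ^ 2 * p ^ 2 * t ^ (2 * p - 1) + (2 * p - 1) * (t - 2 * c * t ^ p))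
      (Ioi 0) := by
    have hderiv : ∀ t ∈ Ioi (0 : ℝ), HasDerivAt
        (fun t : ℝ => c ^ 2 * p ^ 2 * t ^ (2 * p - 1) + (2 * p - 1) * (t - 2 * c * t ^ p))
        ((2 * p - 1) * (c * p * t ^ (p - 1) - 1) ^ 2) t := by
      intro t (ht : 0 < t)
      have h := ((Real.hasDerivAt_rpow_const (p := 2 * p - 1) (Or.inl ht.ne')).const_mul
        (c ^ 2 * p ^ 2)).add (((hasDerivAt_id t).sub
          ((Real.hasDerivAt_rpow_const (p := p) (Or.inl ht.ne')).const_mul (2 * c))).const_mul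
          (2 * p - 1))
      have hsq : t ^ (2 * p - 1 - 1) = t ^ (p - 1) * t ^ (p - 1) := by
        rw [← Real.rpow_add ht]; ring_nf
      refine h.congr_deriv ?_
      rw [hsq]
      ring
    refine monotoneOn_of_hasDerivWithinAt_nonneg (convex_Ioi 0)
      (fun t ht => (hderiv t ht).continuousAt.continuousWithinAt)
      (fun t ht => (hderiv t (interior_subset ht)).hasDerivWithinAt) (fun t _ => ?_)
    have : 0 ≤ 2 * p - 1 := by linarith
    positivity
  -- A quadratic in `c` that is nonnegative for every `c` has nonpositive discriminant: this is
  -- Cauchy–Schwarz for `∫ p t^(p-1) dt` over `[y, x]`, without integrals.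
  have hquad (c : ℝ) : 0 ≤ p ^ 2 * (x ^ (2 * p - 1) - y ^ (2 * p - 1)) * (c * c)
      + (-2 * (2 * p - 1) * (x ^ p - y ^ p)) * c + (2 * p - 1) * (x - y) := by
    have := hψ c hy (hy.trans_le hyx) hyx
    simp only at this
    linarith
  have hdisc := discrim_le_zero hquad
  rw [discrim] at hdisc
  have : 0 < 4 * (2 * p - 1) := by linarith
  nlinarith

theorem mul_sq_rpow_sub_rpow_le {p x y : ℝ} (hp : 1 < 2 * p) (hx : 0 < x) (hy : 0 < y) :
    (2 * p - 1) * (x ^ p - y ^ p) ^ 2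
      ≤ p ^ 2 * ((x - y) * (x ^ (2 * p - 1) - y ^ (2 * p - 1))) := by
  rcases le_total y x with hyx | hxy
  · exact mul_sq_rpow_sub_rpow_le_of_le hp hy hyx
  · convert mul_sq_rpow_sub_rpow_le_of_le hp hx hxy using 1 <;> ring

noncomputable def aitSahaliaDrift (αm1 α₀ α₁ α₂ κ x : ℝ) : ℝ :=
  αm1 * x⁻¹ - α₀ + α₁ * x - α₂ * x ^ κ

theorem aitSahaliaDrift_sub (αm1 α₀ α₁ α₂ κ x y : ℝ) :
    aitSahaliaDrift αm1 α₀ α₁ α₂ κ x - aitSahaliaDrift αm1 α₀ α₁ α₂ κ y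
      = α₁ * (x - y) + αm1 * (x⁻¹ - y⁻¹) - α₂ * (x ^ κ - y ^ κ) := by
  unfold aitSahaliaDrift
  ring

theorem two_mul_sub_mul_aitSahaliaDrift_sub_add_le {αm1 α₀ α₁ α₂ σ κ ρ c x y : ℝ}
    (hαm1 : 0 ≤ αm1) (hκ : 2 * ρ - 1 = κ) (hρ : 1 < 2 * ρ) (hc₀ : 0 ≤ c)
    (hc : c * (σ * ρ) ^ 2 ≤ 2 * α₂ * κ) (hx : 0 < x) (hy : 0 < y) :
    2 * (x - y) * (aitSahaliaDrift αm1 α₀ α₁ α₂ κ x - aitSahaliaDrift αm1 α₀ α₁ α₂ κ y)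
      + c * (σ * x ^ ρ - σ * y ^ ρ) ^ 2 ≤ 2 * α₁ * (x - y) ^ 2 := by
  have hDI : (x - y) * (x⁻¹ - y⁻¹) ≤ 0 :=
    (monotoneOn_id.antivaryOn antitoneOn_inv_pos).sub_mul_sub_nonpos hy hx
  have hDK : 0 ≤ (x - y) * (x ^ κ - y ^ κ) :=
    (monotoneOn_id.monovaryOn (Real.monotoneOn_rpow_Ici_of_exponent_nonneg
      (by linarith : 0 ≤ κ))).sub_mul_sub_nonneg hy.le hx.le
  have hG := mul_sq_rpow_sub_rpow_le hρ hx hy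
  rw [hκ] at hG
  have hdiffusion : c * (σ * x ^ ρ - σ * y ^ ρ) ^ 2 ≤ 2 * α₂ * ((x - y) * (x ^ κ - y ^ κ)) := by
    refine le_of_mul_le_mul_left ?_ (by linarith : 0 < κ)
    calc κ * (c * (σ * x ^ ρ - σ * y ^ ρ) ^ 2) = c * σ ^ 2 * (κ * (x ^ ρ - y ^ ρ) ^ 2) := by ring
      _ ≤ c * σ ^ 2 * (ρ ^ 2 * ((x - y) * (x ^ κ - y ^ κ))) := by gcongr
      _ = c * (σ * ρ) ^ 2 * ((x - y) * (x ^ κ - y ^ κ)) := by ring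
      _ ≤ 2 * α₂ * κ * ((x - y) * (x ^ κ - y ^ κ)) := by gcongr
      _ = κ * (2 * α₂ * ((x - y) * (x ^ κ - y ^ κ))) := by ring
  rw [aitSahaliaDrift_sub]
  nlinarith [mul_nonpos_of_nonneg_of_nonpos hαm1 hDI]

theorem mul_sq_rpow_sub_rpow_le_sq_aitSahaliaDrift_sub_add {αm1 α₀ α₁ α₂ κ c x y : ℝ}
    (hαm1 : 0 ≤ αm1) (hα₂ : 0 ≤ α₂) (hκ : 0 ≤ κ) (hc : c < α₂ ^ 2) (hx : 0 < x) (hy : 0 < y) :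
    c * (x ^ κ - y ^ κ) ^ 2
      ≤ (aitSahaliaDrift αm1 α₀ α₁ α₂ κ x - aitSahaliaDrift αm1 α₀ α₁ α₂ κ y) ^ 2
        + (α₁ * α₂) ^ 2 / (α₂ ^ 2 - c) * (x - y) ^ 2 := by
  have hε : 0 < α₂ ^ 2 - c := sub_pos.mpr hc
  have hKI : (x ^ κ - y ^ κ) * (x⁻¹ - y⁻¹) ≤ 0 :=
    ((Real.monotoneOn_rpow_Ici_of_exponent_nonneg hκ).mono Ioi_subset_Ici_self |>.antivaryOn
      antitoneOn_inv_pos).sub_mul_sub_nonpos hy hx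
  have hAMGM : 2 * (α₁ * α₂ * (x - y)) * (x ^ κ - y ^ κ)
      ≤ (α₂ ^ 2 - c) * (x ^ κ - y ^ κ) ^ 2 + (α₁ * α₂) ^ 2 / (α₂ ^ 2 - c) * (x - y) ^ 2 := by
    have hsq : (α₂ ^ 2 - c) * (x ^ κ - y ^ κ) ^ 2 + (α₁ * α₂) ^ 2 / (α₂ ^ 2 - c) * (x - y) ^ 2
        - 2 * (α₁ * α₂ * (x - y)) * (x ^ κ - y ^ κ)
        = ((α₂ ^ 2 - c) * (x ^ κ - y ^ κ) - α₁ * α₂ * (x - y)) ^ 2 / (α₂ ^ 2 - c) := by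
      field_simp
      ring
    have : 0 ≤ ((α₂ ^ 2 - c) * (x ^ κ - y ^ κ) - α₁ * α₂ * (x - y)) ^ 2 / (α₂ ^ 2 - c) := by
      positivity
    linarith
  rw [aitSahaliaDrift_sub]
  nlinarith [sq_nonneg (α₁ * (x - y) + αm1 * (x⁻¹ - y⁻¹)),
    mul_nonpos_of_nonneg_of_nonpos (mul_nonneg hα₂ hαm1) hKI]

theorem aitSahalia_critical_parameter_bounds {α₂ σ κ ρ : ℝ} (hα₂ : 0 < α₂) (hσ : 0 < σ)
    (hκ : 1 < κ) (hcrit : κ + 1 = 2 * ρ) (hpar : α₂ / σ ^ 2 > (κ + 1) / (2 * Real.sqrt 2)) :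
    (σ * ρ) ^ 2 < 2 * α₂ * κ ∧ (ρ * σ ^ 2) ^ 2 < 2 * α₂ ^ 2 := by
  have hs2 : Real.sqrt 2 ^ 2 = 2 := Real.sq_sqrt (by norm_num)
  have hs2lt : Real.sqrt 2 < 2 := by nlinarith [Real.sqrt_nonneg 2]
  have hgg : ρ * σ ^ 2 < Real.sqrt 2 * α₂ := by
    rw [gt_iff_lt, div_lt_div_iff₀ (by positivity) (by positivity)] at hpar
    nlinarith
  have hρ : 0 < ρ := by linarith
  have hρσ : 0 < ρ * σ ^ 2 := by positivity
  constructor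
  · have hρκ : Real.sqrt 2 * ρ < 2 * κ := by nlinarith
    calc (σ * ρ) ^ 2 = ρ * σ ^ 2 * ρ := by ring
      _ < Real.sqrt 2 * α₂ * ρ := by gcongr
      _ = α₂ * (Real.sqrt 2 * ρ) := by ring
      _ < α₂ * (2 * κ) := by gcongr
      _ = 2 * α₂ * κ := by ring
  · calc (ρ * σ ^ 2) ^ 2 < (Real.sqrt 2 * α₂) ^ 2 := by gcongr
      _ = 2 * α₂ ^ 2 := by rw [mul_pow, hs2]

theorem stmt_18_general (αm1 α₀ α₁ α₂ σ κ ρ : ℝ)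
    (hm1 : 0 < αm1) (h₁ : 0 < α₁) (h₂ : 0 < α₂) (hσ : 0 < σ)
    (hκ : 1 < κ) (hcrit : κ + 1 = 2 * ρ)
    (hpar2 : α₂ / σ^2 > (κ + 1) / (2 * Real.sqrt 2)) :
    ∀ h₀' : ℝ, 0 < h₀' →
      ∃ q : ℝ, 2 < q ∧ ∃ ϱ : ℝ, 1 < ϱ ∧ ∃ L₁ : ℝ, 0 ≤ L₁ ∧
        ∀ x y h : ℝ, 0 < x → 0 < y → 0 < h → h ≤ h₀' →
          2 * (x - y) * ((αm1 * x⁻¹ - α₀ + α₁ * x - α₂ * x ^ κ)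
              - (αm1 * y⁻¹ - α₀ + α₁ * y - α₂ * y ^ κ))
            + (q - 1) * (σ * x ^ ρ - σ * y ^ ρ)^2
            + (ϱ / 2) * h * (ρ * σ^2 * x ^ (2 * ρ - 1) - ρ * σ^2 * y ^ (2 * ρ - 1))^2
            - h * ((αm1 * x⁻¹ - α₀ + α₁ * x - α₂ * x ^ κ)
              - (αm1 * y⁻¹ - α₀ + α₁ * y - α₂ * y ^ κ))^2
          ≤ L₁ * (x - y)^2 := by
  intro h₀' hh₀'
  have hκρ : 2 * ρ - 1 = κ := by linarith
  have hρ : 0 < ρ := by linarith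
  obtain ⟨hdrift, hdiff⟩ := aitSahalia_critical_parameter_bounds h₂ hσ hκ hcrit hpar2
  obtain ⟨c, hc1, hc⟩ := exists_between ((one_lt_div (by positivity)).mpr hdrift)
  obtain ⟨ϱ, hϱ1, hϱ⟩ := exists_between ((one_lt_div (by positivity)).mpr hdiff)
  rw [lt_div_iff₀ (by positivity)] at hc hϱ
  have hε : ϱ / 2 * (ρ * σ ^ 2) ^ 2 < α₂ ^ 2 := by linarith
  set C := (α₁ * α₂) ^ 2 / (α₂ ^ 2 - ϱ / 2 * (ρ * σ ^ 2) ^ 2)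
  have hC : 0 ≤ C := div_nonneg (sq_nonneg _) (sub_pos.mpr hε).le
  refine ⟨1 + c, by linarith, ϱ, hϱ1, 2 * α₁ + h₀' * C,
    add_nonneg (by positivity) (mul_nonneg hh₀'.le hC), ?_⟩
  intro x y h hx hy hh hhh
  set f := aitSahaliaDrift αm1 α₀ α₁ α₂ κ
  have hA : 2 * (x - y) * (f x - f y) + c * (σ * x ^ ρ - σ * y ^ ρ) ^ 2 ≤ 2 * α₁ * (x - y) ^ 2 :=
    two_mul_sub_mul_aitSahaliaDrift_sub_add_le hm1.le hκρ (by linarith) (by linarith) hc.le hx hy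
  have hB : ϱ / 2 * (ρ * σ ^ 2) ^ 2 * (x ^ κ - y ^ κ) ^ 2 ≤ (f x - f y) ^ 2 + C * (x - y) ^ 2 :=
    mul_sq_rpow_sub_rpow_le_sq_aitSahaliaDrift_sub_add hm1.le h₂.le (by linarith) hε hx hy
  calc _ = (2 * (x - y) * (f x - f y) + c * (σ * x ^ ρ - σ * y ^ ρ) ^ 2)
        + h * (ϱ / 2 * (ρ * σ ^ 2) ^ 2 * (x ^ κ - y ^ κ) ^ 2 - (f x - f y) ^ 2) := by
        rw [hκρ]; simp only [f, aitSahaliaDrift]; ring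
    _ ≤ 2 * α₁ * (x - y) ^ 2 + h₀' * (C * (x - y) ^ 2) :=
        add_le_add hA ((mul_le_mul_of_nonneg_left (by linarith) hh.le).trans
          (mul_le_mul_of_nonneg_right hhh (mul_nonneg hC (sq_nonneg _))))
    _ = (2 * α₁ + h₀' * C) * (x - y) ^ 2 := by ring

/-- Full generalized monotonicity condition (θ = 1, η = 0) for the Ait-Sahalia model
in the critical regime κ + 1 = 2ρ under α₂/σ² ≥ 2κ − 3/2 and α₂/σ² > (κ+1)/(2√2). -/
theorem stmt_18 (αm1 α₀ α₁ α₂ σ κ ρ : ℝ)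
    (hm1 : 0 < αm1) (h₀ : 0 < α₀) (h₁ : 0 < α₁) (h₂ : 0 < α₂) (hσ : 0 < σ)
    (hκ : 1 < κ) (hρ : 1 < ρ) (hcrit : κ + 1 = 2 * ρ)
    (hpar1 : α₂ / σ^2 ≥ 2 * κ - 3/2)
    (hpar2 : α₂ / σ^2 > (κ + 1) / (2 * Real.sqrt 2)) :
    ∀ h₀' : ℝ, 0 < h₀' →
      ∃ q : ℝ, 2 < q ∧ ∃ ϱ : ℝ, 1 < ϱ ∧ ∃ L₁ : ℝ, 0 ≤ L₁ ∧
        ∀ x y h : ℝ, 0 < x → 0 < y → 0 < h → h ≤ h₀' →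
          2 * (x - y) * ((αm1 * x⁻¹ - α₀ + α₁ * x - α₂ * x ^ κ)
              - (αm1 * y⁻¹ - α₀ + α₁ * y - α₂ * y ^ κ))
            + (q - 1) * (σ * x ^ ρ - σ * y ^ ρ)^2
            + (ϱ / 2) * h * (ρ * σ^2 * x ^ (2 * ρ - 1) - ρ * σ^2 * y ^ (2 * ρ - 1))^2
            - h * ((αm1 * x⁻¹ - α₀ + α₁ * x - α₂ * x ^ κ)
              - (αm1 * y⁻¹ - α₀ + α₁ * y - α₂ * y ^ κ))^2
          ≤ L₁ * (x - y)^2 :=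
  stmt_18_general αm1 α₀ α₁ α₂ σ κ ρ hm1 h₁ h₂ hσ hκ hcrit hpar2
end

section
/- Let α₋₁, α₀, α₁, α₂, σ > 0 and κ, ρ > 1 with κ + 1 > 2ρ. Define f(x) = α₋₁x⁻¹ − α₀ + α₁x − α₂x^κ and g(x) = σx^ρ for x > 0, so that g'(x)g(x) = ρσ²x^{2ρ−1}. Then for every h₀ > 0 there exist constants q ∈ (2, ∞), ϱ ∈ (1, ∞) and L₁ ∈ [0, ∞) such that for all x, y > 0 and all h ∈ (0, h₀]: 2(x − y)(f(x) − f(y)) + (q − 1)(g(x) − g(y))² + (ϱ/2)·h·(ρσ²x^{2ρ−1} − ρσ²y^{2ρ−1})² − h·(f(x) − f(y))² ≤ L₁ (x − y)². -/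
/-!
Take `q = 3`, `ϱ = 2` and, by symmetry, `y ≤ x`; put `Δ = x - y`. The drift difference is
`α₁ Δ - B - J` with `J = α₋₁ (y⁻¹ - x⁻¹) ≥ 0` and the dissipation `B = α₂ (x^κ - y^κ)`, which is
at least `α₂ x^(κ-1) Δ`. Thus `2Δ (f x - f y)` contributes `-2BΔ` and `-h (f x - f y)²` contributes
`-h B² / 2`, up to multiples of `Δ²`. The tangent bound `x^p - y^p ≤ p x^(p-1) Δ` controls the
increments of `g` and of `g'g` by multiples of `x^(ρ-1) Δ` and `x^(2ρ-2) Δ`; since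
`2ρ - 2 < κ - 1`, any multiple of `x^(2ρ-2)` is at most any positive multiple of `x^(κ-1)` plus a
constant, so both diffusion terms are absorbed by the dissipation.
-/

open Real Set

lemma rpow_sub_one_mul_sub_le_rpow_sub_rpow {p x y : ℝ} (hp : 1 ≤ p) (hy : 0 ≤ y) (hxy : y ≤ x) :
    x ^ (p - 1) * (x - y) ≤ x ^ p - y ^ p := by
  have hx : 0 ≤ x := hy.trans hxy
  have hmono : y ^ (p - 1) ≤ x ^ (p - 1) := rpow_le_rpow hy hxy (by linarith)
  have hsplit : ∀ z : ℝ, 0 ≤ z → z ^ p = z ^ (p - 1) * z := fun z hz => by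
    rw [← rpow_add_one' hz (by linarith), sub_add_cancel]
  rw [hsplit x hx, hsplit y hy]
  nlinarith

lemma rpow_sub_rpow_le_mul_rpow_sub_one_mul_sub {p x y : ℝ} (hp : 1 ≤ p) (hy : 0 ≤ y)
    (hxy : y ≤ x) : x ^ p - y ^ p ≤ p * x ^ (p - 1) * (x - y) := by
  rcases hxy.eq_or_lt with rfl | hlt
  · simp
  have hslope := (convexOn_rpow hp).slope_le_of_hasDerivAt (mem_Ici.2 hy)
    (mem_Ici.2 (hy.trans hlt.le)) hlt (hasDerivAt_rpow_const (Or.inr hp))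
  rwa [slope_def_field, div_le_iff₀ (sub_pos.2 hlt)] at hslope

lemma exists_mul_rpow_le_mul_rpow_add_s19 {a b k m : ℝ} (ha : 0 ≤ a) (hab : a < b) (hk : 0 ≤ k)
    (hm : 0 < m) : ∃ C, 0 ≤ C ∧ ∀ x, 0 ≤ x → k * x ^ a ≤ m * x ^ b + C := by
  have hba : 0 < b - a := sub_pos.2 hab
  set M := (k / m) ^ (b - a)⁻¹
  have hM : 0 ≤ M := rpow_nonneg (div_nonneg hk hm.le) _
  refine ⟨k * M ^ a, by positivity, fun x hx => ?_⟩
  rcases le_total x M with hxM | hMx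
  · have : k * x ^ a ≤ k * M ^ a := by gcongr
    have : 0 ≤ m * x ^ b := by positivity
    linarith
  · have hkm : k / m ≤ x ^ (b - a) := by
      calc k / m = M ^ (b - a) := by
            rw [← rpow_mul (div_nonneg hk hm.le), inv_mul_cancel₀ hba.ne', rpow_one]
        _ ≤ x ^ (b - a) := by gcongr
    have : k * x ^ a ≤ m * x ^ b :=
      calc k * x ^ a = m * (k / m) * x ^ a := by field_simp
        _ ≤ m * x ^ (b - a) * x ^ a := by gcongr
        _ = m * x ^ b := by rw [mul_assoc, ← rpow_add_of_nonneg hx hba.le ha, sub_add_cancel]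
    have : 0 ≤ k * M ^ a := by positivity
    linarith

namespace AitSahalia

variable {σ ρ κ a c x y : ℝ}

lemma sq_sub_diffusion_le (hρ : 1 ≤ ρ) (hκ : 1 ≤ κ) (ha : 0 ≤ a) (hy : 0 < y) (hxy : y ≤ x)
    (hc : σ ^ 2 * ρ ^ 2 * x ^ (2 * ρ - 2) ≤ a * x ^ (κ - 1) + c) :
    (σ * x ^ ρ - σ * y ^ ρ) ^ 2 ≤ a * (x ^ κ - y ^ κ) * (x - y) + c * (x - y) ^ 2 := by
  have hx : 0 < x := hy.trans_le hxy
  have hP0 : 0 ≤ x ^ ρ - y ^ ρ := sub_nonneg.2 (rpow_le_rpow hy.le hxy (by linarith))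
  have hP := rpow_sub_rpow_le_mul_rpow_sub_one_mul_sub hρ hy.le hxy
  have hA := rpow_sub_one_mul_sub_le_rpow_sub_rpow hκ hy.le hxy
  have hsq : (x ^ (ρ - 1)) ^ 2 = x ^ (2 * ρ - 2) := by
    rw [← rpow_natCast, ← rpow_mul hx.le]; ring_nf
  calc (σ * x ^ ρ - σ * y ^ ρ) ^ 2 = σ ^ 2 * (x ^ ρ - y ^ ρ) ^ 2 := by ring
    _ ≤ σ ^ 2 * (ρ * x ^ (ρ - 1) * (x - y)) ^ 2 := by gcongr
    _ = σ ^ 2 * ρ ^ 2 * x ^ (2 * ρ - 2) * (x - y) ^ 2 := by rw [← hsq]; ring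
    _ ≤ (a * x ^ (κ - 1) + c) * (x - y) ^ 2 := by gcongr
    _ = a * (x ^ (κ - 1) * (x - y)) * (x - y) + c * (x - y) ^ 2 := by ring
    _ ≤ a * (x ^ κ - y ^ κ) * (x - y) + c * (x - y) ^ 2 := by gcongr

lemma sq_sub_diffusionCorrection_le (hρ : 1 ≤ ρ) (hκ : 1 ≤ κ) (ha : 0 ≤ a) (hy : 0 < y)
    (hxy : y ≤ x) (hc : ρ * σ ^ 2 * (2 * ρ - 1) * x ^ (2 * ρ - 2) ≤ a / 2 * x ^ (κ - 1) + c) :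
    (ρ * σ ^ 2 * x ^ (2 * ρ - 1) - ρ * σ ^ 2 * y ^ (2 * ρ - 1)) ^ 2
      ≤ (a * (x ^ κ - y ^ κ)) ^ 2 / 2 + 2 * c ^ 2 * (x - y) ^ 2 := by
  have hG0 : 0 ≤ ρ * σ ^ 2 * x ^ (2 * ρ - 1) - ρ * σ ^ 2 * y ^ (2 * ρ - 1) := by
    rw [← mul_sub]
    exact mul_nonneg (by positivity) (sub_nonneg.2 (rpow_le_rpow hy.le hxy (by linarith)))
  have hG : x ^ (2 * ρ - 1) - y ^ (2 * ρ - 1) ≤ (2 * ρ - 1) * x ^ (2 * ρ - 2) * (x - y) := by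
    simpa only [show 2 * ρ - 1 - 1 = 2 * ρ - 2 by ring] using
      rpow_sub_rpow_le_mul_rpow_sub_one_mul_sub (p := 2 * ρ - 1) (by linarith) hy.le hxy
  have hA := rpow_sub_one_mul_sub_le_rpow_sub_rpow hκ hy.le hxy
  have hlin : ρ * σ ^ 2 * x ^ (2 * ρ - 1) - ρ * σ ^ 2 * y ^ (2 * ρ - 1)
      ≤ a / 2 * (x ^ κ - y ^ κ) + c * (x - y) :=
    calc _ = ρ * σ ^ 2 * (x ^ (2 * ρ - 1) - y ^ (2 * ρ - 1)) := by ring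
      _ ≤ ρ * σ ^ 2 * ((2 * ρ - 1) * x ^ (2 * ρ - 2) * (x - y)) := by gcongr
      _ = ρ * σ ^ 2 * (2 * ρ - 1) * x ^ (2 * ρ - 2) * (x - y) := by ring
      _ ≤ (a / 2 * x ^ (κ - 1) + c) * (x - y) := by gcongr
      _ = a / 2 * (x ^ (κ - 1) * (x - y)) + c * (x - y) := by ring
      _ ≤ a / 2 * (x ^ κ - y ^ κ) + c * (x - y) := by gcongr
  calc _ ≤ (a / 2 * (x ^ κ - y ^ κ) + c * (x - y)) ^ 2 := pow_le_pow_left₀ hG0 hlin 2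
    _ ≤ _ := by linarith [sq_nonneg (a / 2 * (x ^ κ - y ^ κ) - c * (x - y))]

lemma monotonicity_bound_of_dissipation {α₁ Δ B J D Q R c₁ c₂ h h₀ : ℝ} (hΔ : 0 ≤ Δ) (hB : 0 ≤ B)
    (hJ : 0 ≤ J) (hc₂ : 0 ≤ c₂) (hh : 0 ≤ h) (hhh₀ : h ≤ h₀) (hD : D = α₁ * Δ - B - J)
    (hQ : Q ≤ B * Δ + c₁ * Δ ^ 2) (hR : R ≤ B ^ 2 / 2 + c₂ * Δ ^ 2) :
    2 * Δ * D + 2 * Q + h * R - h * D ^ 2 ≤ (2 * α₁ + 2 * c₁ + h₀ * (c₂ + α₁ ^ 2)) * Δ ^ 2 := by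
  have hdrift : 2 * Δ * D ≤ 2 * α₁ * Δ ^ 2 - 2 * B * Δ := by
    rw [hD]; nlinarith [mul_nonneg hΔ hJ]
  -- `(u - v)² ≥ v² / 2 - u²` with `u = α₁ Δ`, `v = B + J ≥ B`
  have hsq : B ^ 2 / 2 - α₁ ^ 2 * Δ ^ 2 ≤ D ^ 2 := by
    rw [hD]; nlinarith [sq_nonneg (B + J - 2 * α₁ * Δ), mul_nonneg hB hJ, sq_nonneg J]
  have hstep : h * R - h * D ^ 2 ≤ h₀ * ((c₂ + α₁ ^ 2) * Δ ^ 2) :=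
    calc h * R - h * D ^ 2 = h * (R - D ^ 2) := by ring
      _ ≤ h * ((c₂ + α₁ ^ 2) * Δ ^ 2) := by gcongr; linarith
      _ ≤ h₀ * ((c₂ + α₁ ^ 2) * Δ ^ 2) := by gcongr
  nlinarith

end AitSahalia

open AitSahalia in
theorem stmt_19_general (αm1 α₀ α₁ α₂ σ κ ρ : ℝ)
    (hm1 : 0 < αm1) (h₁ : 0 < α₁) (h₂ : 0 < α₂)
    (hκ : 1 < κ) (hρ : 1 < ρ) (hreg : κ + 1 > 2 * ρ) :
    ∀ h₀' : ℝ, 0 < h₀' →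
      ∃ q : ℝ, 2 < q ∧ ∃ ϱ : ℝ, 1 < ϱ ∧ ∃ L₁ : ℝ, 0 ≤ L₁ ∧
        ∀ x y h : ℝ, 0 < x → 0 < y → 0 < h → h ≤ h₀' →
          2 * (x - y) * ((αm1 * x⁻¹ - α₀ + α₁ * x - α₂ * x ^ κ)
              - (αm1 * y⁻¹ - α₀ + α₁ * y - α₂ * y ^ κ))
            + (q - 1) * (σ * x ^ ρ - σ * y ^ ρ)^2
            + (ϱ / 2) * h * (ρ * σ^2 * x ^ (2 * ρ - 1) - ρ * σ^2 * y ^ (2 * ρ - 1))^2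
            - h * ((αm1 * x⁻¹ - α₀ + α₁ * x - α₂ * x ^ κ)
              - (αm1 * y⁻¹ - α₀ + α₁ * y - α₂ * y ^ κ))^2
          ≤ L₁ * (x - y)^2 := by
  intro h₀' hh₀'
  obtain ⟨c₁, hc₁0, hc₁⟩ := exists_mul_rpow_le_mul_rpow_add_s19 (a := 2 * ρ - 2) (b := κ - 1)
    (k := σ ^ 2 * ρ ^ 2) (by linarith) (by linarith) (by positivity) h₂
  obtain ⟨c₂, hc₂0, hc₂⟩ := exists_mul_rpow_le_mul_rpow_add_s19 (a := 2 * ρ - 2) (b := κ - 1)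
    (k := ρ * σ ^ 2 * (2 * ρ - 1)) (m := α₂ / 2) (by linarith) (by linarith)
    (mul_nonneg (by positivity) (by linarith)) (by positivity)
  refine ⟨3, by norm_num, 2, by norm_num, 2 * α₁ + 2 * c₁ + h₀' * (2 * c₂ ^ 2 + α₁ ^ 2),
    by positivity, fun x y h hx hy hh hhh₀ => ?_⟩
  wlog hxy : y ≤ x generalizing x y
  · linarith [this y x hy hx (le_of_not_ge hxy)]
  have hQ := sq_sub_diffusion_le (σ := σ) hρ.le hκ.le h₂.le hy hxy (hc₁ x hx.le)
  have hR := sq_sub_diffusionCorrection_le hρ.le hκ.le h₂.le hy hxy (hc₂ x hx.le)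
  have hA : 0 ≤ α₂ * (x ^ κ - y ^ κ) :=
    mul_nonneg h₂.le (sub_nonneg.2 (rpow_le_rpow hy.le hxy (by linarith)))
  have hJ : 0 ≤ αm1 * (y⁻¹ - x⁻¹) :=
    mul_nonneg hm1.le (sub_nonneg.2 ((inv_le_inv₀ hx hy).2 hxy))
  have := monotonicity_bound_of_dissipation (α₁ := α₁)
    (D := (αm1 * x⁻¹ - α₀ + α₁ * x - α₂ * x ^ κ) - (αm1 * y⁻¹ - α₀ + α₁ * y - α₂ * y ^ κ))
    (sub_nonneg.2 hxy) hA hJ (by positivity) hh.le hhh₀ (by ring) hQ hR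
  linarith

/-- Full generalized monotonicity condition (θ = 1, η = 0) for the Ait-Sahalia model
in the standard regime κ + 1 > 2ρ; no parameter restriction beyond positivity. -/
theorem stmt_19 (αm1 α₀ α₁ α₂ σ κ ρ : ℝ)
    (hm1 : 0 < αm1) (h₀ : 0 < α₀) (h₁ : 0 < α₁) (h₂ : 0 < α₂) (hσ : 0 < σ)
    (hκ : 1 < κ) (hρ : 1 < ρ) (hreg : κ + 1 > 2 * ρ) :
    ∀ h₀' : ℝ, 0 < h₀' →
      ∃ q : ℝ, 2 < q ∧ ∃ ϱ : ℝ, 1 < ϱ ∧ ∃ L₁ : ℝ, 0 ≤ L₁ ∧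
        ∀ x y h : ℝ, 0 < x → 0 < y → 0 < h → h ≤ h₀' →
          2 * (x - y) * ((αm1 * x⁻¹ - α₀ + α₁ * x - α₂ * x ^ κ)
              - (αm1 * y⁻¹ - α₀ + α₁ * y - α₂ * y ^ κ))
            + (q - 1) * (σ * x ^ ρ - σ * y ^ ρ)^2
            + (ϱ / 2) * h * (ρ * σ^2 * x ^ (2 * ρ - 1) - ρ * σ^2 * y ^ (2 * ρ - 1))^2
            - h * ((αm1 * x⁻¹ - α₀ + α₁ * x - α₂ * x ^ κ)
              - (αm1 * y⁻¹ - α₀ + α₁ * y - α₂ * y ^ κ))^2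
          ≤ L₁ * (x - y)^2 :=
  stmt_19_general αm1 α₀ α₁ α₂ σ κ ρ hm1 h₁ h₂ hκ hρ hreg
end
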